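/- arXiv:2509.26289 — 6 statements merged into one kernel-verified Lean document; each statement's English description precedes it below -/
import Mathlib

section
/- Let f : ℝ → ℝ ∪ {∞} be proper, closed, convex, essentially smooth, and suppose there is a finite set W ⊂ int(dom f) such that f is strongly convex on every compact convex subset of int(dom f) \ W. Then f is strictly convex on int(dom f), and hence f is a Legendre function. -/
open Set Filter Topology

noncomputable section

/-- `h` is proper: finite somewhere and never `⊥`. -/
def EProper (h : ℝ → EReal) : Prop := (∃ x, h x ≠ ⊤) ∧ ∀ x, h x ≠ ⊥

/-- effective domain of an extended-real-valued function. -/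
def EDom (h : ℝ → EReal) : Set ℝ := {x | h x ≠ ⊤}

/-- convexity of an extended-real-valued function on `ℝ`. -/
def EConvexFn (h : ℝ → EReal) : Prop :=
  ∀ x y a b : ℝ, 0 ≤ a → 0 ≤ b → a + b = 1 →
    h (a * x + b * y) ≤ (a : EReal) * h x + (b : EReal) * h y

/-- recession function of `h` with base point `y`:
`h_∞(d) = sup_{t>0} (h(y + t d) − h(y))/t`. -/
noncomputable def erec (h : ℝ → EReal) (y : ℝ) (d : ℝ) : EReal :=
  ⨆ t : {t : ℝ // 0 < t}, ((((t : ℝ)⁻¹ : ℝ) : EReal)) * (h (y + (t : ℝ) * d) - h y)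

/-- Fenchel conjugate. -/
noncomputable def econj (h : ℝ → EReal) (y : ℝ) : EReal :=
  ⨆ x : ℝ, ((x * y : ℝ) : EReal) - h x

/-- subdifferential of `h` at `x`. -/
def ESubdiff (h : ℝ → EReal) (x : ℝ) : Set ℝ :=
  {ξ | ∀ z : ℝ, h x + ((ξ * (z - x) : ℝ) : EReal) ≤ h z}

/-- essential smoothness witnessed by the derivative function `h'`. -/
def EssSmoothWith (h : ℝ → EReal) (h' : ℝ → ℝ) : Prop :=
  (interior (EDom h)).Nonempty ∧
  (∀ x ∈ interior (EDom h), HasDerivAt (fun z => (h z).toReal) (h' x) x) ∧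
  ∀ (u : ℕ → ℝ) (x0 : ℝ), (∀ n, u n ∈ interior (EDom h)) →
    Tendsto u atTop (𝓝 x0) → x0 ∈ frontier (EDom h) →
    Tendsto (fun n => |h' (u n)|) atTop atTop

def EssSmooth (h : ℝ → EReal) : Prop := ∃ h', EssSmoothWith h h'

/-- essential strict convexity: strict convexity on every convex subset of `dom ∂h`. -/
def EssStrictConvex (h : ℝ → EReal) : Prop :=
  ∀ s : Set ℝ, s ⊆ {x | (ESubdiff h x).Nonempty} → Convex ℝ s →
    ∀ x ∈ s, ∀ y ∈ s, x ≠ y → ∀ a b : ℝ, 0 < a → 0 < b → a + b = 1 →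
      h (a * x + b * y) < (a : EReal) * h x + (b : EReal) * h y

/-- Legendre function: proper, closed, convex, essentially smooth and
essentially strictly convex. -/
def ELegendre (h : ℝ → EReal) : Prop :=
  EProper h ∧ LowerSemicontinuous h ∧ EConvexFn h ∧ EssSmooth h ∧ EssStrictConvex h

/-- strong convexity of `h` on a set `s` (with some modulus `m > 0`). -/
def StrongConvexOnE (h : ℝ → EReal) (s : Set ℝ) : Prop :=
  ∃ m : ℝ, 0 < m ∧ ∀ x ∈ s, ∀ y ∈ s, ∀ a b : ℝ, 0 ≤ a → 0 ≤ b → a + b = 1 →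
    h (a * x + b * y) + ((m / 2 * (a * b) * (x - y) ^ 2 : ℝ) : EReal)
      ≤ (a : EReal) * h x + (b : EReal) * h y

lemma flip_div (p q r t : ℝ) : (p - q) / (r - t) = (q - p) / (t - r) := by
  rw [← neg_sub q p, ← neg_sub t r, neg_div_neg_eq]

/-- convex function: left and right slopes sandwich the derivative. -/
lemma slope_le_deriv_le {g : ℝ → ℝ} {s : Set ℝ} (hg : ConvexOn ℝ s g) {u c : ℝ}
    (hd : HasDerivAt g c u) (hs : s ∈ 𝓝 u) (hu : u ∈ s) :
    (∀ v ∈ s, v < u → (g u - g v) / (u - v) ≤ c) ∧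
    (∀ w ∈ s, u < w → c ≤ (g w - g u) / (w - u)) := by
  have htd : Tendsto (slope g u) (𝓝[≠] u) (𝓝 c) := hasDerivAt_iff_tendsto_slope.mp hd
  constructor
  · intro v hv hvu
    have h1 : Tendsto (slope g u) (𝓝[<] u) (𝓝 c) :=
      htd.mono_left (nhdsWithin_mono _ (fun z hz => ne_of_lt hz))
    refine ge_of_tendsto h1 ?_
    have hev1 : ∀ᶠ z in 𝓝[<] u, z ∈ s := mem_nhdsWithin_of_mem_nhds hs
    have hev2 : ∀ᶠ z in 𝓝[<] u, v < z :=
      mem_nhdsWithin_of_mem_nhds (isOpen_Ioi.mem_nhds hvu)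
    have hev3 : ∀ᶠ z in 𝓝[<] u, z < u := self_mem_nhdsWithin
    filter_upwards [hev1, hev2, hev3] with z hzs hvz hzu
    have := hg.secant_mono hu hv hzs (ne_of_lt hvu) (ne_of_lt hzu) hvz.le
    rw [slope_def_field, flip_div (g u) (g v) u v]
    exact this
  · intro w hw huw
    have h1 : Tendsto (slope g u) (𝓝[>] u) (𝓝 c) :=
      htd.mono_left (nhdsWithin_mono _ (fun z hz => ne_of_gt hz))
    refine le_of_tendsto h1 ?_
    have hev1 : ∀ᶠ z in 𝓝[>] u, z ∈ s := mem_nhdsWithin_of_mem_nhds hs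
    have hev2 : ∀ᶠ z in 𝓝[>] u, z < w :=
      mem_nhdsWithin_of_mem_nhds (isOpen_Iio.mem_nhds huw)
    have hev3 : ∀ᶠ z in 𝓝[>] u, u < z := self_mem_nhdsWithin
    filter_upwards [hev1, hev2, hev3] with z hzs hzw huz
    have := hg.secant_mono hu hzs hw (ne_of_gt huz) (ne_of_gt huw) hzw.le
    rw [slope_def_field]
    exact this


/-- convex function equal to chord at one interior point is affine on the segment. -/
lemma key_affine {s : Set ℝ} {g : ℝ → ℝ} (hg : ConvexOn ℝ s g)
    {x y a b : ℝ} (hx : x ∈ s) (hy : y ∈ s) (hxy : x < y) (hsub : Icc x y ⊆ s)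
    (ha : 0 < a) (hb : 0 < b) (hab : a + b = 1)
    (heq : g (a * x + b * y) = a * g x + b * g y) :
    ∀ w ∈ Icc x y, g w = g (a * x + b * y) +
      (w - (a * x + b * y)) * ((g y - g x) / (y - x)) := by
  set z := a * x + b * y with hzdef
  set k := (g y - g x) / (y - x) with hkdef
  have hyx : (0:ℝ) < y - x := by linarith
  have ezx : z - x = b * (y - x) := by rw [hzdef]; linear_combination x * hab
  have eyz : y - z = a * (y - x) := by rw [hzdef]; linear_combination -y * hab
  have hzx : x < z := by nlinarith [mul_pos hb hyx]
  have hzy : z < y := by nlinarith [mul_pos ha hyx]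
  have hzs : z ∈ s := hsub ⟨hzx.le, hzy.le⟩
  have hkx : (g x - g z) / (x - z) = k := by
    have e1 : g x - g z = b * (g x - g y) := by linear_combination -heq - g x * hab
    have e2 : x - z = b * (x - y) := by linarith
    rw [e1, e2, mul_div_mul_left (g x - g y) (x - y) hb.ne', flip_div]
  have hky : (g y - g z) / (y - z) = k := by
    have e3 : g y - g z = a * (g y - g x) := by linear_combination -heq - g y * hab
    have e4 : y - z = a * (y - x) := eyz
    rw [e3, e4, mul_div_mul_left (g y - g x) (y - x) ha.ne']
  intro w hw
  rcases eq_or_ne w z with rfl | hwz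
  · simp
  · have h1 := hg.secant_mono hzs hx (hsub hw) hzx.ne hwz hw.1
    have h2 := hg.secant_mono hzs (hsub hw) hy hwz hzy.ne' hw.2
    rw [hkx] at h1
    rw [hky] at h2
    have heqs : (g w - g z) / (w - z) = k := le_antisymm h2 h1
    have := (div_eq_iff (sub_ne_zero.mpr hwz)).mp heqs
    linarith [mul_comm k (w - z)]

lemma hfin_lemma {f : ℝ → EReal} (hProp : EProper f) {x : ℝ} (hx : x ∈ EDom f) :
    f x = (((f x).toReal : ℝ) : EReal) := (EReal.coe_toReal hx (hProp.2 x)).symm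

lemma EDom_convex {f : ℝ → EReal} (hProp : EProper f) (hConv : EConvexFn f) :
    Convex ℝ (EDom f) := by
  intro x hx y hy a b ha hb hab
  have h1 := hConv x y a b ha hb hab
  rw [hfin_lemma hProp hx, hfin_lemma hProp hy, ← EReal.coe_mul, ← EReal.coe_mul,
    ← EReal.coe_add] at h1
  simp only [smul_eq_mul]
  exact ne_top_of_le_ne_top (EReal.coe_ne_top _) h1

lemma toReal_convexOn {f : ℝ → EReal} (hProp : EProper f) (hConv : EConvexFn f) :
    ConvexOn ℝ (EDom f) (fun x => (f x).toReal) := by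
  refine ⟨EDom_convex hProp hConv, ?_⟩
  intro x hx y hy a b ha hb hab
  have h1 := hConv x y a b ha hb hab
  rw [hfin_lemma hProp hx, hfin_lemma hProp hy, ← EReal.coe_mul, ← EReal.coe_mul,
    ← EReal.coe_add] at h1
  have hmem : a * x + b * y ∈ EDom f := by
    have := EDom_convex hProp hConv hx hy ha hb hab
    simpa only [smul_eq_mul] using this
  rw [hfin_lemma hProp hmem] at h1
  simp only [smul_eq_mul]
  exact EReal.coe_le_coe_iff.mp h1

lemma core_strict {f : ℝ → EReal} (hProp : EProper f) (hConv : EConvexFn f)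
    {W : Set ℝ} (hWfin : W.Finite)
    (hStrong : ∀ s : Set ℝ, s ⊆ interior (EDom f) \ W → IsCompact s → Convex ℝ s →
      StrongConvexOnE f s)
    {x y : ℝ} (hx : x ∈ interior (EDom f)) (hy : y ∈ interior (EDom f)) (hxy : x < y)
    {a b : ℝ} (ha : 0 < a) (hb : 0 < b) (hab : a + b = 1) :
    f (a * x + b * y) < (a : EReal) * f x + (b : EReal) * f y := by
  set g : ℝ → ℝ := fun x => (f x).toReal with hgdef
  have hDs : interior (EDom f) ⊆ EDom f := interior_subset
  have hDconv : Convex ℝ (interior (EDom f)) := (EDom_convex hProp hConv).interior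
  have hzD : a * x + b * y ∈ interior (EDom f) := by
    simpa only [smul_eq_mul] using hDconv hx hy ha.le hb.le hab
  have hle := hConv x y a b ha.le hb.le hab
  rcases lt_or_ge (f (a * x + b * y)) ((a : EReal) * f x + (b : EReal) * f y) with h | h
  · exact h
  exfalso
  have heqE : f (a * x + b * y) = (a : EReal) * f x + (b : EReal) * f y :=
    le_antisymm hle h
  -- convert to a real equality
  rw [hfin_lemma hProp (hDs hx), hfin_lemma hProp (hDs hy), hfin_lemma hProp (hDs hzD),
    ← EReal.coe_mul, ← EReal.coe_mul, ← EReal.coe_add] at heqE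
  have heq : g (a * x + b * y) = a * g x + b * g y := EReal.coe_eq_coe_iff.mp heqE
  -- affinity on [x, y]
  have hsub : Icc x y ⊆ interior (EDom f) := by
    rw [← segment_eq_Icc hxy.le]
    exact hDconv.segment_subset hx hy
  have hgconv : ConvexOn ℝ (interior (EDom f)) g :=
    (toReal_convexOn hProp hConv).subset hDs hDconv
  have haff := key_affine hgconv hx hy hxy hsub ha hb hab heq
  -- find a subinterval of (x, y) avoiding W
  have hop : IsOpen (Ioo x y \ W) := isOpen_Ioo.sdiff hWfin.isClosed
  have hne : (Ioo x y \ W).Nonempty := ((Set.Ioo_infinite hxy).diff hWfin).nonempty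
  obtain ⟨p, hp⟩ := hne
  obtain ⟨ε, hε, hball⟩ := Metric.isOpen_iff.mp hop p hp
  set q := p + ε / 2 with hqdef
  have hpq : p < q := by rw [hqdef]; linarith
  have hIcc : Icc p q ⊆ Ioo x y \ W := by
    intro t ht
    apply hball
    rw [Metric.mem_ball, Real.dist_eq, abs_lt]
    constructor <;> [skip; skip] <;> rcases ht with ⟨h1, h2⟩ <;> rw [hqdef] at h2 <;> linarith
  clear_value q
  have hIccD : Icc p q ⊆ interior (EDom f) \ W := by
    intro t ht
    exact ⟨hsub ⟨(hIcc ht).1.1.le, (hIcc ht).1.2.le⟩, (hIcc ht).2⟩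
  obtain ⟨m, hm, hsc⟩ := hStrong (Icc p q) hIccD isCompact_Icc (convex_Icc p q)
  have hpm : p ∈ Icc p q := ⟨le_refl p, hpq.le⟩
  have hqm : q ∈ Icc p q := ⟨hpq.le, le_refl q⟩
  have h2 := hsc p hpm q hqm (1/2) (1/2) (by norm_num) (by norm_num) (by norm_num)
  have hmemz : (1/2 : ℝ) * p + (1/2 : ℝ) * q ∈ interior (EDom f) :=
    (hIccD ⟨by linarith [hpm.1, hqm.1], by linarith [hpm.2, hqm.2]⟩).1
  rw [hfin_lemma hProp (hDs (hIccD hpm).1), hfin_lemma hProp (hDs (hIccD hqm).1),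
    hfin_lemma hProp (hDs hmemz), ← EReal.coe_mul, ← EReal.coe_mul,
    ← EReal.coe_add, ← EReal.coe_add] at h2
  have h3 : g ((1/2 : ℝ) * p + (1/2 : ℝ) * q) + m / 2 * (1/2 * (1/2)) * (p - q) ^ 2
      ≤ 1/2 * g p + 1/2 * g q := EReal.coe_le_coe_iff.mp h2
  -- affinity kills the gap
  have hpxy : p ∈ Icc x y := ⟨(hIcc hpm).1.1.le, (hIcc hpm).1.2.le⟩
  have hqxy : q ∈ Icc x y := ⟨(hIcc hqm).1.1.le, (hIcc hqm).1.2.le⟩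
  have hp1 : x ≤ p := hpxy.1
  have hp2 : p ≤ y := hpxy.2
  have hq1 : x ≤ q := hqxy.1
  have hq2 : q ≤ y := hqxy.2
  have hmxy : (1/2 : ℝ) * p + (1/2 : ℝ) * q ∈ Icc x y :=
    ⟨by linarith, by linarith⟩
  have e1 := haff p hpxy
  have e2 := haff q hqxy
  have e3 := haff ((1/2 : ℝ) * p + (1/2 : ℝ) * q) hmxy
  have hgap : (0:ℝ) < m / 2 * (1/2 * (1/2)) * (p - q) ^ 2 := by
    have : p - q ≠ 0 := sub_ne_zero.mpr hpq.ne
    positivity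
  nlinarith [h3, e1, e2, e3]

lemma subdiff_mem_interior {f : ℝ → EReal} (hProp : EProper f) (hConv : EConvexFn f)
    (hSmooth : EssSmooth f) {x : ℝ} (hx : (ESubdiff f x).Nonempty) :
    x ∈ interior (EDom f) := by
  obtain ⟨f', hne, hderiv, hblow⟩ := hSmooth
  obtain ⟨ξ, hξ⟩ := hx
  set g : ℝ → ℝ := fun x => (f x).toReal with hgdef
  -- x is in the domain
  have hxdom : x ∈ EDom f := by
    obtain ⟨x1, hx1⟩ := hProp.1
    intro htop
    have h1 := hξ x1
    rw [show f x = ⊤ from htop, EReal.top_add_coe] at h1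
    exact hx1 (top_le_iff.mp h1)
  by_contra hxD
  obtain ⟨y0, hy0⟩ := hne
  have hDs : interior (EDom f) ⊆ EDom f := interior_subset
  have hDomConv : Convex ℝ (EDom f) := EDom_convex hProp hConv
  have hgconv : ConvexOn ℝ (EDom f) g := toReal_convexOn hProp hConv
  -- real subgradient inequality
  have hsubreal : ∀ z ∈ EDom f, g x + ξ * (z - x) ≤ g z := by
    intro z hz
    have h1 := hξ z
    rw [hfin_lemma hProp hxdom, hfin_lemma hProp hz, ← EReal.coe_add] at h1
    exact EReal.coe_le_coe_iff.mp h1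
  have hxy0 : x ≠ y0 := fun h => hxD (h ▸ hy0)
  -- the approximating sequence
  set t : ℕ → ℝ := fun n => 1 / (n + 1) with htdef
  set u : ℕ → ℝ := fun n => t n * y0 + (1 - t n) * x with hudef
  have ht0 : ∀ n, 0 < t n := fun n => by positivity
  have ht1 : ∀ n : ℕ, t n ≤ 1 := by
    intro n
    show (1:ℝ) / (n + 1) ≤ 1
    rw [div_le_one (by positivity)]
    linarith [Nat.cast_nonneg (α := ℝ) n]
  have ht2 : ∀ n ≥ 1, t n ≤ 1 / 2 := by
    intro n hn
    show (1:ℝ) / (n + 1) ≤ 1 / 2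
    have hcast : (1:ℝ) ≤ (n:ℝ) := by exact_mod_cast hn
    rw [div_le_div_iff₀ (by positivity) (by norm_num)]
    linarith
  have huD : ∀ n, u n ∈ interior (EDom f) := by
    intro n
    have := hDomConv.combo_interior_closure_mem_interior (a := t n) (b := 1 - t n)
      hy0 (subset_closure hxdom) (ht0 n) (by linarith [ht1 n]) (by ring)
    simpa only [smul_eq_mul] using this
  have htlim : Tendsto t atTop (𝓝 0) := by
    rw [htdef]
    exact tendsto_one_div_add_atTop_nhds_zero_nat
  have hulim : Tendsto u atTop (𝓝 x) := by
    have h1 : Tendsto (fun n => t n * y0 + (1 - t n) * x) atTop (𝓝 (0 * y0 + (1 - 0) * x)) :=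
      ((htlim.mul_const y0).add (((tendsto_const_nhds.sub htlim)).mul_const x))
    rw [hudef]
    simpa using h1
  have hu_eq : ∀ n, u n - x = t n * (y0 - x) := by
    intro n
    show t n * y0 + (1 - t n) * x - x = t n * (y0 - x)
    ring
  clear_value u t
  clear htdef hudef
  have hfront : x ∈ frontier (EDom f) := ⟨subset_closure hxdom, hxD⟩
  have hB := hblow u x huD hulim hfront
  have hnhds : ∀ n, EDom f ∈ 𝓝 (u n) :=
    fun n => mem_nhds_iff.mpr ⟨interior (EDom f), hDs, isOpen_interior, huD n⟩
  -- bound |f' (u n)| uniformly for n ≥ 1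
  rcases hxy0.lt_or_gt with hlt | hlt
  · -- x < y0
    set N := g y0 - g x + |ξ| * (y0 - x) with hNdef
    set C := max |ξ| (|N| / ((y0 - x) / 2)) with hCdef
    have hbound : ∀ n ≥ 1, |f' (u n)| ≤ C := by
      intro n hn
      have hux : x < u n := by
        nlinarith [hu_eq n, mul_pos (ht0 n) (show (0:ℝ) < y0 - x by linarith)]
      have huy : u n ≤ (x + y0) / 2 := by
        have h1 := mul_le_mul_of_nonneg_right (ht2 n hn) (show (0:ℝ) ≤ y0 - x by linarith)
        linarith [hu_eq n]
      have huy' : u n < y0 := by linarith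
      have hd := hderiv (u n) (huD n)
      obtain ⟨hL, hR⟩ := slope_le_deriv_le hgconv hd (hnhds n) (hDs (huD n))
      -- lower bound
      have hlow : ξ ≤ f' (u n) := by
        refine le_trans ?_ (hL x hxdom hux)
        rw [le_div_iff₀ (by linarith)]
        have := hsubreal (u n) (hDs (huD n))
        nlinarith
      -- upper bound
      have hupp : f' (u n) ≤ |N| / ((y0 - x) / 2) := by
        refine le_trans (hR y0 (hDs hy0) huy') ?_
        apply div_le_div₀ (abs_nonneg N) ?_ (by linarith) (by linarith)
        refine le_trans ?_ (le_abs_self N)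
        have h1 := hsubreal (u n) (hDs (huD n))
        have h2 : -(ξ * (u n - x)) ≤ |ξ| * (y0 - x) := by
          have e1 : (0:ℝ) ≤ |ξ| + ξ := by linarith [neg_abs_le ξ]
          have e2 : (0:ℝ) ≤ u n - x := by linarith
          nlinarith [mul_nonneg e1 e2, mul_le_mul_of_nonneg_left
            (show u n - x ≤ y0 - x by linarith) (abs_nonneg ξ)]
        rw [hNdef]
        linarith
      rw [abs_le]
      constructor
      · have : -C ≤ -|ξ| := by simp [hCdef, le_max_left]
        linarith [neg_abs_le ξ]
      · exact le_trans hupp (le_max_right _ _)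
    obtain ⟨n, hn1, hn2⟩ := ((eventually_atTop.mpr ⟨1, hbound⟩).and
      (hB.eventually_gt_atTop C)).exists
    linarith
  · -- y0 < x
    set N := g y0 - g x + |ξ| * (x - y0) with hNdef
    set C := max |ξ| (|N| / ((x - y0) / 2)) with hCdef
    have hbound : ∀ n ≥ 1, |f' (u n)| ≤ C := by
      intro n hn
      have hux : u n < x := by
        nlinarith [hu_eq n, mul_pos (ht0 n) (show (0:ℝ) < x - y0 by linarith)]
      have huy : (x + y0) / 2 ≤ u n := by
        have h1 := mul_le_mul_of_nonneg_right (ht2 n hn) (show (0:ℝ) ≤ x - y0 by linarith)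
        nlinarith [hu_eq n]
      have huy' : y0 < u n := by linarith
      have hd := hderiv (u n) (huD n)
      obtain ⟨hL, hR⟩ := slope_le_deriv_le hgconv hd (hnhds n) (hDs (huD n))
      -- upper bound via subgradient at x
      have hupp : f' (u n) ≤ ξ := by
        refine le_trans (hR x hxdom hux) ?_
        rw [div_le_iff₀ (by linarith)]
        have h1 := hsubreal (u n) (hDs (huD n))
        nlinarith
      -- lower bound via slope from y0
      have hlow' : (g y0 - g (u n)) / (u n - y0) ≤ |N| / ((x - y0) / 2) := by
        apply div_le_div₀ (abs_nonneg N) ?_ (by linarith) (by linarith)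
        refine le_trans ?_ (le_abs_self N)
        have h1 := hsubreal (u n) (hDs (huD n))
        have h2 : ξ * (u n - x) ≥ -(|ξ| * (x - y0)) := by
          have e1 : (0:ℝ) ≤ |ξ| - ξ := by linarith [le_abs_self ξ]
          have e2 : (0:ℝ) ≤ x - u n := by linarith
          nlinarith [mul_nonneg e1 e2, mul_le_mul_of_nonneg_left
            (show x - u n ≤ x - y0 by linarith) (abs_nonneg ξ)]
        rw [hNdef]
        linarith
      have hlow : -(|N| / ((x - y0) / 2)) ≤ f' (u n) := by
        have e0 : (g (u n) - g y0) / (u n - y0) = -((g y0 - g (u n)) / (u n - y0)) := by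
          rw [← neg_div, neg_sub]
        have h3 := hL y0 (hDs hy0) huy'
        rw [e0] at h3
        linarith
      rw [abs_le]
      constructor
      · refine le_trans ?_ hlow
        simp only [hCdef, neg_le_neg_iff]
        exact le_max_right _ _
      · refine le_trans hupp (le_trans (le_abs_self ξ) (le_max_left _ _))
    obtain ⟨n, hn1, hn2⟩ := ((eventually_atTop.mpr ⟨1, hbound⟩).and
      (hB.eventually_gt_atTop C)).exists
    linarith

/-- A proper closed convex essentially smooth `f` that is strongly
convex on every compact convex subset of `int(dom f) \ W` (for a finite
`W ⊂ int(dom f)`) is strictly convex on `int(dom f)` and is a Legendre function. -/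
theorem strictConvex_and_legendre (f : ℝ → EReal) (hProp : EProper f)
    (hClosed : LowerSemicontinuous f) (hConv : EConvexFn f)
    (hSmooth : EssSmooth f)
    (W : Set ℝ) (hWfin : W.Finite) (hWsub : W ⊆ interior (EDom f))
    (hStrong : ∀ s : Set ℝ, s ⊆ interior (EDom f) \ W → IsCompact s → Convex ℝ s →
      StrongConvexOnE f s) :
    (∀ x ∈ interior (EDom f), ∀ y ∈ interior (EDom f), x ≠ y →
      ∀ a b : ℝ, 0 < a → 0 < b → a + b = 1 →
        f (a * x + b * y) < (a : EReal) * f x + (b : EReal) * f y)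
    ∧ ELegendre f := by
  have hstrict : ∀ x ∈ interior (EDom f), ∀ y ∈ interior (EDom f), x ≠ y →
      ∀ a b : ℝ, 0 < a → 0 < b → a + b = 1 →
        f (a * x + b * y) < (a : EReal) * f x + (b : EReal) * f y := by
    intro x hx y hy hne a b ha hb hab
    rcases hne.lt_or_gt with h | h
    · exact core_strict hProp hConv hWfin hStrong hx hy h ha hb hab
    · have h1 := core_strict hProp hConv hWfin hStrong hy hx h hb ha (by linarith)
      rw [show b * y + a * x = a * x + b * y by ring] at h1
      calc f (a * x + b * y) < (b : EReal) * f y + (a : EReal) * f x := h1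
        _ = (a : EReal) * f x + (b : EReal) * f y := add_comm _ _
  refine ⟨hstrict, hProp, hClosed, hConv, hSmooth, ?_⟩
  intro s hsub hconv x hxs y hys hne a b ha hb hab
  exact hstrict x (subdiff_mem_interior hProp hConv hSmooth (hsub hxs)) y
    (subdiff_mem_interior hProp hConv hSmooth (hsub hys)) hne a b ha hb hab
end
end

section
/- Let f : ℝ → ℝ₊ ∪ {∞} satisfy: nonnegative, proper, closed, convex, essentially smooth, and strongly convex on every compact convex subset of int(dom f) \ W for some finite W ⊂ int(dom f). Then the perspective cone K = epi f^π ⊂ ℝ³ is pointed (K ∩ −K = {0}) and solid (int K ≠ ∅). -/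
/-!
On the slice `t = 0` the cone is the epigraph of the recession function, so a nonzero element
of `K ∩ -K` yields a direction `d ≠ 0` with `f_∞(d) ≤ r` and `f_∞(-d) ≤ -r`. Then `f` lies below
an affine function on the whole line through `y`, and by midpoint convexity it equals it; so `f`
is affine on `ℝ`, which strong convexity on an interval avoiding the finite set `W` forbids.
For solidity, convexity bounds `f` by some `M` on an interval `[a, b]` of its domain, and the
open cone `{t > 0, a t < x < b t, M t < r}` then lies in `K`.
-/

open Set Filter Topology

noncomputable section

/-- closed perspective function of `f`, where `finf` plays the role of the
recession function of `f`. -/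
noncomputable def persp (f finf : ℝ → EReal) (x t : ℝ) : EReal :=
  if 0 < t then (t : EReal) * f (x / t) else if t = 0 then finf x else ⊤

/-- epigraph of the perspective function, as a subset of `ℝ³`. -/
def perspEpi (f finf : ℝ → EReal) : Set (ℝ × ℝ × ℝ) :=
  {p | persp f finf p.1 p.2.1 ≤ (p.2.2 : EReal)}

section Recession

variable {f : ℝ → EReal} {y Y : ℝ}

lemma le_add_mul_of_erec_le {d r t : ℝ} (hy : f y = Y) (h : erec f y d ≤ r) (ht : 0 < t) :
    f (y + t * d) ≤ ((Y + t * r : ℝ) : EReal) := by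
  have hquot : ((t⁻¹ : ℝ) : EReal) * (f (y + t * d) - Y) ≤ r := by
    rw [← hy]
    exact (le_iSup (fun s : {s : ℝ // 0 < s} => ((s⁻¹ : ℝ) : EReal) *
      (f (y + s * d) - f y)) ⟨t, ht⟩).trans h
  generalize f (y + t * d) = z at hquot ⊢
  induction z with
  | bot => exact bot_le
  | top =>
    rw [EReal.top_sub_coe, EReal.mul_top_of_pos (by exact_mod_cast inv_pos.2 ht)] at hquot
    exact absurd hquot (EReal.coe_lt_top r).not_ge
  | coe z =>
    norm_cast at hquot ⊢
    rw [inv_mul_le_iff₀ ht] at hquot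
    linarith

lemma erec_zero (hy : f y = Y) : erec f y 0 = 0 := by
  simp [erec, hy]

end Recession

section Convexity

variable {f : ℝ → EReal}

lemma EConvexFn.le_of_mem_Icc (hf : EConvexFn f) {a b z M : ℝ} (ha : f a ≤ M) (hb : f b ≤ M)
    (hz : z ∈ Icc a b) : f z ≤ M := by
  rw [← segment_eq_Icc (hz.1.trans hz.2)] at hz
  obtain ⟨μ, ν, hμ, hν, hμν, rfl⟩ := hz
  calc f (μ • a + ν • b) ≤ μ * f a + ν * f b := hf a b μ ν hμ hν hμν
    _ ≤ μ * M + ν * M := by gcongr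
    _ = M := by norm_cast; rw [← add_mul, hμν, one_mul]

lemma EConvexFn.eq_of_le_on_line (hf : EConvexFn f) (hbot : ∀ x, f x ≠ ⊥) {y Y d r : ℝ}
    (hy : f y = Y) (hle : ∀ s : ℝ, f (y + s * d) ≤ ((Y + s * r : ℝ) : EReal)) (s : ℝ) :
    f (y + s * d) = ((Y + s * r : ℝ) : EReal) := by
  have hmid := hf (y + s * d) (y + -s * d) (1 / 2) (1 / 2) (by norm_num) (by norm_num)
    (by norm_num)
  have hU := hle s
  have hV := hle (-s)
  rw [show 1 / 2 * (y + s * d) + 1 / 2 * (y + -s * d) = y by ring, hy] at hmid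
  lift f (y + s * d) to ℝ using ⟨ne_top_of_le_ne_top (EReal.coe_ne_top _) hU, hbot _⟩ with U
  lift f (y + -s * d) to ℝ using ⟨ne_top_of_le_ne_top (EReal.coe_ne_top _) hV, hbot _⟩ with V
  norm_cast at hmid hU hV ⊢
  linarith

end Convexity

section Affine

variable {f : ℝ → EReal}

lemma exists_affine_of_erec_le_of_erec_neg_le (hf : EConvexFn f) (hbot : ∀ x, f x ≠ ⊥)
    {y Y d r : ℝ} (hy : f y = Y) (hd : d ≠ 0) (h₁ : erec f y d ≤ r)
    (h₂ : erec f y (-d) ≤ ((-r : ℝ) : EReal)) :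
    ∃ α β : ℝ, ∀ z, f z = ((α + β * z : ℝ) : EReal) := by
  have hle : ∀ s : ℝ, f (y + s * d) ≤ ((Y + s * r : ℝ) : EReal) := by
    intro s
    rcases lt_trichotomy s 0 with hs | rfl | hs
    · simpa using le_add_mul_of_erec_le hy h₂ (neg_pos.2 hs)
    · simp [hy]
    · exact le_add_mul_of_erec_le hy h₁ hs
  refine ⟨Y - y * r / d, r / d, fun z => ?_⟩
  have hz := hf.eq_of_le_on_line hbot hy hle ((z - y) / d)
  rw [show y + (z - y) / d * d = z by field_simp; ring] at hz
  rw [hz]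
  congr 1
  field_simp
  ring

lemma not_strongConvexOnE_Icc_of_affine {α β c d : ℝ} (hf : ∀ z, f z = ((α + β * z : ℝ) : EReal))
    (hcd : c < d) : ¬ StrongConvexOnE f (Icc c d) := by
  rintro ⟨m, hm, hstrong⟩
  have hmid := hstrong c ⟨le_rfl, hcd.le⟩ d ⟨hcd.le, le_rfl⟩ (1 / 2) (1 / 2) (by norm_num)
    (by norm_num) (by norm_num)
  simp only [hf] at hmid
  norm_cast at hmid
  nlinarith [mul_pos hm (pow_pos (sub_pos.2 hcd) 2)]

lemma Set.Finite.exists_Icc_subset_compl {W : Set ℝ} (hW : W.Finite) :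
    ∃ c, Icc c (c + 1) ⊆ Wᶜ := by
  obtain ⟨c, hc⟩ := hW.bddAbove
  exact ⟨c + 1, fun z hz hzW => by linarith [hc hzW, hz.1]⟩

lemma not_affine_of_strongConvexOnE {W : Set ℝ} (hW : W.Finite)
    (hstrong : ∀ s : Set ℝ, s ⊆ interior (EDom f) \ W → IsCompact s → Convex ℝ s →
      StrongConvexOnE f s) :
    ¬ ∃ α β : ℝ, ∀ z, f z = ((α + β * z : ℝ) : EReal) := by
  rintro ⟨α, β, hf⟩
  have hdom : interior (EDom f) = univ := by
    rw [eq_univ_of_forall (s := EDom f) fun z => show f z ≠ ⊤ by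
      rw [hf]; exact EReal.coe_ne_top _, interior_univ]
  obtain ⟨c, hc⟩ := hW.exists_Icc_subset_compl
  refine not_strongConvexOnE_Icc_of_affine hf (lt_add_one c) (hstrong _ ?_ isCompact_Icc
    (convex_Icc _ _))
  rwa [hdom, ← compl_eq_univ_sdiff]

end Affine

lemma exists_lt_mem_of_interior_nonempty {s : Set ℝ} (h : (interior s).Nonempty) :
    ∃ a b, a < b ∧ a ∈ s ∧ b ∈ s := by
  obtain ⟨a, b, hab, hsub⟩ := isOpen_interior.exists_Ioo_subset h
  exact ⟨(2 * a + b) / 3, (a + 2 * b) / 3, by linarith,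
    interior_subset (hsub ⟨by linarith, by linarith⟩),
    interior_subset (hsub ⟨by linarith, by linarith⟩)⟩

section Perspective

variable {f finf : ℝ → EReal}

lemma nonneg_of_mem_perspEpi {p : ℝ × ℝ × ℝ} (hp : p ∈ perspEpi f finf) : 0 ≤ p.2.1 := by
  by_contra! ht
  simp [perspEpi, persp, ht.not_gt, ht.ne] at hp

lemma perspEpi_inter_neg_eq_zero (hf : EConvexFn f) (hbot : ∀ x, f x ≠ ⊥) {y Y : ℝ}
    (hy : f y = Y) (hnaff : ¬ ∃ α β : ℝ, ∀ z, f z = ((α + β * z : ℝ) : EReal)) :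
    perspEpi f (erec f y) ∩ -perspEpi f (erec f y) = {0} := by
  refine Subset.antisymm ?_ (by simp [perspEpi, persp, erec_zero hy])
  rintro ⟨x, t, r⟩ ⟨hp, hn⟩
  obtain rfl : t = 0 :=
    le_antisymm (by simpa using nonneg_of_mem_perspEpi hn) (nonneg_of_mem_perspEpi hp)
  have h₁ : erec f y x ≤ r := by simpa [perspEpi, persp] using hp
  have h₂ : erec f y (-x) ≤ ((-r : ℝ) : EReal) := by simpa [perspEpi, persp] using hn
  obtain rfl : x = 0 := by_contra fun hx =>
    hnaff (exists_affine_of_erec_le_of_erec_neg_le hf hbot hy hx h₁ h₂)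
  rw [erec_zero hy] at h₁
  rw [neg_zero, erec_zero hy] at h₂
  obtain rfl : r = 0 := le_antisymm (neg_nonneg.1 (by exact_mod_cast h₂)) (by exact_mod_cast h₁)
  rfl

lemma perspEpi_interior_nonempty (hf : EConvexFn f) {a b : ℝ} (hab : a < b) (ha : f a ≠ ⊤)
    (hb : f b ≠ ⊤) : (interior (perspEpi f finf)).Nonempty := by
  set M := max (f a).toReal (f b).toReal
  have hM : ∀ z ∈ Icc a b, f z ≤ M := fun z =>
    hf.le_of_mem_Icc ((EReal.le_coe_toReal ha).trans (by exact_mod_cast le_max_left _ _))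
      ((EReal.le_coe_toReal hb).trans (by exact_mod_cast le_max_right _ _))
  let U : Set (ℝ × ℝ × ℝ) :=
    {p | 0 < p.2.1 ∧ a * p.2.1 < p.1 ∧ p.1 < b * p.2.1 ∧ M * p.2.1 < p.2.2}
  have hU : IsOpen U := by
    refine (isOpen_lt ?_ ?_).and ((isOpen_lt ?_ ?_).and ((isOpen_lt ?_ ?_).and
      (isOpen_lt ?_ ?_))) <;> fun_prop
  have hUK : U ⊆ perspEpi f finf := by
    rintro ⟨x, t, r⟩ ⟨ht, hax, hxb, hr⟩
    have hz : x / t ∈ Icc a b := ⟨(le_div_iff₀ ht).2 hax.le, (div_le_iff₀ ht).2 hxb.le⟩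
    change persp f finf x t ≤ r
    rw [persp, if_pos ht]
    calc (t : EReal) * f (x / t) ≤ t * M :=
          mul_le_mul_of_nonneg_left (hM _ hz) (by exact_mod_cast ht.le)
      _ ≤ r := by exact_mod_cast (mul_comm t M).trans_le hr.le
  exact ⟨((a + b) / 2, 1, M + 1), interior_maximal hUK hU
    ⟨one_pos, by linarith, by linarith, by linarith⟩⟩

end Perspective

theorem perspEpi_pointed_solid_general (f : ℝ → EReal) (hProp : EProper f)
    (hConv : EConvexFn f) (hSmooth : EssSmooth f)
    (W : Set ℝ) (hWfin : W.Finite)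
    (hStrong : ∀ s : Set ℝ, s ⊆ interior (EDom f) \ W → IsCompact s → Convex ℝ s →
      StrongConvexOnE f s)
    (y : ℝ) (hy : y ∈ EDom f) :
    perspEpi f (erec f y) ∩ -(perspEpi f (erec f y)) = {0}
    ∧ (interior (perspEpi f (erec f y))).Nonempty := by
  have hfy : f y = (f y).toReal := (EReal.coe_toReal hy (hProp.2 y)).symm
  obtain ⟨a, b, hab, ha, hb⟩ := exists_lt_mem_of_interior_nonempty hSmooth.choose_spec.1
  exact ⟨perspEpi_inter_neg_eq_zero hConv hProp.2 hfy
      (not_affine_of_strongConvexOnE hWfin hStrong),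
    perspEpi_interior_nonempty hConv hab ha hb⟩

/-- Under the blanket assumption (nonnegative, proper, closed, convex,
essentially smooth, strongly convex on compact convex subsets of `int(dom f) \ W` for a
finite `W ⊂ int(dom f)`), the perspective cone `K = epi f^π ⊂ ℝ³` is pointed and solid. -/
theorem perspEpi_pointed_solid (f : ℝ → EReal) (hProp : EProper f)
    (hClosed : LowerSemicontinuous f) (hConv : EConvexFn f)
    (hNonneg : ∀ x, 0 ≤ f x) (hSmooth : EssSmooth f)
    (W : Set ℝ) (hWfin : W.Finite) (hWsub : W ⊆ interior (EDom f))
    (hStrong : ∀ s : Set ℝ, s ⊆ interior (EDom f) \ W → IsCompact s → Convex ℝ s →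
      StrongConvexOnE f s)
    (y : ℝ) (hy : y ∈ EDom f) :
    perspEpi f (erec f y) ∩ -(perspEpi f (erec f y)) = {0}
    ∧ (interior (perspEpi f (erec f y))).Nonempty :=
  perspEpi_pointed_solid_general f hProp hConv hSmooth W hWfin hStrong y hy
end
end

section
/- Let f : ℝ → ℝ₊ ∪ {∞} be nonnegative, proper, closed and convex, with f a Legendre function. Then the dual cone of the perspective cone satisfies: (epi f^π)* = {(−x, s, 0) : (x,s) ∈ epi (f*)_∞} ∪ {(−x, r, t) : t > 0, (x,r) ∈ t · epi f*}. Equivalently, (x*, t*, r*) ∈ epi (f*)^π if and only if (−x*, r*, t*) ∈ (epi f^π)*. -/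
open Set Filter Topology

noncomputable section

/-- dual cone of a subset of `ℝ³` (standard inner product). -/
def dual3 (K : Set (ℝ × ℝ × ℝ)) : Set (ℝ × ℝ × ℝ) :=
  {q | ∀ p ∈ K, 0 ≤ p.1 * q.1 + p.2.1 * q.2.1 + p.2.2 * q.2.2}

private lemma lim_aux {a b e : ℝ} (h : ∀ t : ℝ, 0 < t → b ≤ e + a / t) : b ≤ e := by
  have h1 : Tendsto (fun t : ℝ => e + a * t⁻¹) atTop (𝓝 (e + a * 0)) :=
    tendsto_const_nhds.add (tendsto_inv_atTop_zero.const_mul a)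
  have h2 : ∀ᶠ t : ℝ in atTop, b ≤ e + a * t⁻¹ := by
    filter_upwards [eventually_gt_atTop 0] with t ht
    simpa [div_eq_mul_inv] using h t ht
  simpa using ge_of_tendsto h1 h2

private lemma emul_le_iff {t r : ℝ} (ht : 0 < t) {a : EReal} (ha : a ≠ ⊥) :
    (t : EReal) * a ≤ (r : EReal) ↔ a ≤ ((r / t : ℝ) : EReal) := by
  induction a with
  | bot => simp at ha
  | coe a =>
      rw [← EReal.coe_mul, EReal.coe_le_coe_iff, EReal.coe_le_coe_iff,
        le_div_iff₀ ht, mul_comm]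
  | top =>
      rw [EReal.coe_mul_top_of_pos ht]
      simp

/-- lower bound for the conjugate -/
private lemma le_econj (f : ℝ → EReal) (x z : ℝ) :
    ((x * z : ℝ) : EReal) - f x ≤ econj f z :=
  le_iSup (fun x => ((x * z : ℝ) : EReal) - f x) x

private lemma econj_ne_bot (f : ℝ → EReal) {y : ℝ} (hy : f y ≠ ⊤) (hy' : f y ≠ ⊥)
    (z : ℝ) : econj f z ≠ ⊥ := by
  intro hb
  have h1 := le_econj f y z
  rw [hb, le_bot_iff, ← EReal.coe_toReal hy hy', ← EReal.coe_sub] at h1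
  exact EReal.coe_ne_bot _ h1

/-- `erec f y d ≥ z * d` whenever `f* z < ⊤` and `f y` is finite. -/
private lemma coe_le_erec (f : ℝ → EReal) {y : ℝ} (hy : f y ≠ ⊤) (hy' : f y ≠ ⊥)
    (hbot : ∀ x, f x ≠ ⊥) {z : ℝ} (hz : econj f z ≠ ⊤) (d : ℝ) :
    ((z * d : ℝ) : EReal) ≤ erec f y d := by
  set fy := (f y).toReal with hfy
  have hfy' : f y = (fy : EReal) := (EReal.coe_toReal hy hy').symm
  set c := (econj f z).toReal with hc
  have hc' : econj f z = (c : EReal) :=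
    (EReal.coe_toReal hz (econj_ne_bot f hy hy' z)).symm
  have key : ∀ t : ℝ, 0 < t →
      ((z * d + (z * y - c - fy) / t : ℝ) : EReal) ≤ erec f y d := by
    intro t ht
    have hterm : (((t : ℝ)⁻¹ : ℝ) : EReal) * (f (y + t * d) - f y) ≤ erec f y d :=
      le_iSup (fun s : {s : ℝ // 0 < s} =>
        (((s : ℝ)⁻¹ : ℝ) : EReal) * (f (y + (s : ℝ) * d) - f y)) ⟨t, ht⟩
    rcases eq_or_ne (f (y + t * d)) ⊤ with htop | hne
    · rw [htop, hfy', EReal.top_sub_coe, EReal.coe_mul_top_of_pos (by positivity)] at hterm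
      exact le_trans le_top hterm
    · set v := (f (y + t * d)).toReal with hv
      have hv' : f (y + t * d) = (v : EReal) := (EReal.coe_toReal hne (hbot _)).symm
      have h1 := le_econj f (y + t * d) z
      rw [hv', hc', ← EReal.coe_sub, EReal.coe_le_coe_iff] at h1
      rw [hv', hfy', ← EReal.coe_sub, ← EReal.coe_mul] at hterm
      refine le_trans ?_ hterm
      rw [EReal.coe_le_coe_iff]
      rw [inv_mul_eq_div, le_div_iff₀ ht, add_mul, div_mul_cancel₀ _ ht.ne']
      nlinarith [h1]
  rcases eq_or_ne (erec f y d) ⊤ with htop | hne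
  · rw [htop]; exact le_top
  · have hnb : erec f y d ≠ ⊥ := by
      intro hb
      have := key 1 one_pos
      rw [hb, le_bot_iff] at this
      exact EReal.coe_ne_bot _ this
    set e := (erec f y d).toReal with he
    have he' : erec f y d = (e : EReal) := (EReal.coe_toReal hne hnb).symm
    rw [he', EReal.coe_le_coe_iff]
    refine lim_aux (a := -(z * y - c - fy)) fun t ht => ?_
    have := key t ht
    rw [he', EReal.coe_le_coe_iff] at this
    rw [neg_div]
    linarith

/-- points on a recession ray stay in the domain. -/
private lemma dom_ray (f : ℝ → EReal) {y : ℝ} (hy : f y ≠ ⊤) (hy' : f y ≠ ⊥)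
    {d r : ℝ} (h : erec f y d ≤ (r : EReal)) {s : ℝ} (hs : 0 < s) :
    f (y + s * d) ≠ ⊤ := by
  intro htop
  have hterm : (((s : ℝ)⁻¹ : ℝ) : EReal) * (f (y + s * d) - f y) ≤ erec f y d :=
    le_iSup (fun u : {u : ℝ // 0 < u} =>
      (((u : ℝ)⁻¹ : ℝ) : EReal) * (f (y + (u : ℝ) * d) - f y)) ⟨s, hs⟩
  rw [htop, ← EReal.coe_toReal hy hy', EReal.top_sub_coe,
    EReal.coe_mul_top_of_pos (by positivity)] at hterm
  exact (EReal.coe_lt_top r).not_ge (le_trans hterm h)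

/-- forward direction: `(f*)_∞(d) ≤ q₂` implies `u*d ≤ q₂` on the domain of `f`. -/
private lemma rec_conj_forward (f : ℝ → EReal) (hbot : ∀ x, f x ≠ ⊥)
    (h0 : econj f 0 ≠ ⊤) (h0' : econj f 0 ≠ ⊥) {d q₂ : ℝ}
    (h : erec (econj f) 0 d ≤ (q₂ : EReal)) {u : ℝ} (hu : f u ≠ ⊤) :
    u * d ≤ q₂ := by
  set c0 := (econj f 0).toReal with hc0
  have hc0' : econj f 0 = (c0 : EReal) := (EReal.coe_toReal h0 h0').symm
  set v := (f u).toReal with hv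
  have hv' : f u = (v : EReal) := (EReal.coe_toReal hu (hbot u)).symm
  refine lim_aux (a := v + c0) fun t ht => ?_
  have hterm : (((t : ℝ)⁻¹ : ℝ) : EReal) * (econj f (0 + t * d) - econj f 0) ≤ (q₂ : EReal) :=
    le_trans (le_iSup (fun s : {s : ℝ // 0 < s} =>
      (((s : ℝ)⁻¹ : ℝ) : EReal) * (econj f (0 + (s : ℝ) * d) - econj f 0)) ⟨t, ht⟩) h
  rw [zero_add] at hterm
  have hne : econj f (t * d) ≠ ⊤ := by
    intro htop
    rw [htop, hc0', EReal.top_sub_coe,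
      EReal.coe_mul_top_of_pos (by positivity)] at hterm
    exact (EReal.coe_lt_top q₂).not_ge hterm
  set w := (econj f (t * d)).toReal with hw
  have hw' : econj f (t * d) = (w : EReal) :=
    (EReal.coe_toReal hne (by
      intro hb
      have h1 := le_econj f u (t * d)
      rw [hb, hv', ← EReal.coe_sub, le_bot_iff] at h1
      exact EReal.coe_ne_bot _ h1)).symm
  have h1 := le_econj f u (t * d)
  rw [hv', hw', ← EReal.coe_sub, EReal.coe_le_coe_iff] at h1
  rw [hw', hc0', ← EReal.coe_sub, ← EReal.coe_mul, EReal.coe_le_coe_iff] at hterm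
  rw [inv_mul_eq_div, div_le_iff₀ ht] at hterm
  rw [← sub_le_iff_le_add', le_div_iff₀ ht]
  nlinarith [h1, hterm]

/-- backward direction. -/
private lemma rec_conj_backward (f : ℝ → EReal) (hbot : ∀ x, f x ≠ ⊥)
    {y₀ : ℝ} (hy₀ : f y₀ ≠ ⊤) (h0 : econj f 0 ≠ ⊤) (h0' : econj f 0 ≠ ⊥) {d q₂ : ℝ}
    (h : ∀ u : ℝ, f u ≠ ⊤ → u * d ≤ q₂) :
    erec (econj f) 0 d ≤ (q₂ : EReal) := by
  set c0 := (econj f 0).toReal with hc0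
  have hc0' : econj f 0 = (c0 : EReal) := (EReal.coe_toReal h0 h0').symm
  refine iSup_le ?_
  rintro ⟨t, ht⟩
  have hup : econj f (t * d) ≤ ((t * q₂ + c0 : ℝ) : EReal) := by
    refine iSup_le fun x => ?_
    rcases eq_or_ne (f x) ⊤ with htop | hne
    · rw [htop, EReal.sub_top]
      exact bot_le
    · set v := (f x).toReal with hv
      have hv' : f x = (v : EReal) := (EReal.coe_toReal hne (hbot x)).symm
      have h2 : -v ≤ c0 := by
        have := le_econj f x 0
        rw [hv', hc0', mul_zero, ← EReal.coe_sub, EReal.coe_le_coe_iff] at this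
        linarith
      rw [hv', ← EReal.coe_sub, EReal.coe_le_coe_iff]
      have := h x hne
      nlinarith
  have hne : econj f (t * d) ≠ ⊤ := fun htop => by
    rw [htop] at hup; exact (EReal.coe_lt_top _).not_ge hup
  set w := (econj f (t * d)).toReal with hw
  have hw' : econj f (t * d) = (w : EReal) :=
    (EReal.coe_toReal hne (econj_ne_bot f hy₀ (hbot y₀) _)).symm
  show (((t : ℝ)⁻¹ : ℝ) : EReal) * (econj f (0 + t * d) - econj f 0) ≤ (q₂ : EReal)
  rw [zero_add, hw', hc0', ← EReal.coe_sub, ← EReal.coe_mul, EReal.coe_le_coe_iff]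
  rw [hw', EReal.coe_le_coe_iff] at hup
  rw [inv_mul_eq_div, div_le_iff₀ ht]
  linarith

private lemma mem_epi_pos {f g : ℝ → EReal} {p : ℝ × ℝ × ℝ} (ht : 0 < p.2.1) :
    p ∈ perspEpi f g ↔ ((p.2.1 : ℝ) : EReal) * f (p.1 / p.2.1) ≤ (p.2.2 : EReal) := by
  simp [perspEpi, persp, ht]

private lemma mem_epi_zero {f g : ℝ → EReal} {p : ℝ × ℝ × ℝ} (ht : p.2.1 = 0) :
    p ∈ perspEpi f g ↔ g p.1 ≤ (p.2.2 : EReal) := by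
  simp [perspEpi, persp, ht]

private lemma mem_epi_neg {f g : ℝ → EReal} {p : ℝ × ℝ × ℝ} (ht : p.2.1 < 0) :
    p ∉ perspEpi f g := by
  simp only [perspEpi, persp, Set.mem_setOf_eq, if_neg ht.not_gt, if_neg ht.ne]
  exact fun h => (EReal.coe_lt_top _).not_ge h

/-- For a nonnegative Legendre `f`, the dual cone of the perspective
cone is `{(−x,s,0) : (x,s) ∈ epi (f*)_∞} ∪ {(−x,r,t) : t > 0, (x,r) ∈ t·epi f*}`;
equivalently `(x*,t*,r*) ∈ epi (f*)^π ↔ (−x*,r*,t*) ∈ (epi f^π)*`. -/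
theorem dual_of_perspEpi (f : ℝ → EReal) (hNonneg : ∀ x, 0 ≤ f x)
    (hLeg : ELegendre f) (y : ℝ) (hy : y ∈ EDom f)
    (h0 : (0 : ℝ) ∈ EDom (econj f)) :
    dual3 (perspEpi f (erec f y))
        = {q : ℝ × ℝ × ℝ | q.2.2 = 0 ∧ erec (econj f) 0 (-q.1) ≤ (q.2.1 : EReal)}
          ∪ {q : ℝ × ℝ × ℝ |
              0 < q.2.2 ∧ econj f (-q.1 / q.2.2) ≤ ((q.2.1 / q.2.2 : ℝ) : EReal)}
    ∧ ∀ p : ℝ × ℝ × ℝ,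
        p ∈ perspEpi (econj f) (erec (econj f) 0)
          ↔ (-p.1, p.2.2, p.2.1) ∈ dual3 (perspEpi f (erec f y)) := by
  have hbot : ∀ x, f x ≠ ⊥ := hLeg.1.2
  have hy' : f y ≠ ⊥ := hbot y
  replace hy : f y ≠ ⊤ := hy
  replace h0 : econj f 0 ≠ ⊤ := h0
  have h0' : econj f 0 ≠ ⊥ := econj_ne_bot f hy hy' 0
  have hcb : ∀ z, econj f z ≠ ⊥ := econj_ne_bot f hy hy'
  set fy := (f y).toReal with hfy
  have hfy' : f y = (fy : EReal) := (EReal.coe_toReal hy hy').symm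
  have hEq : dual3 (perspEpi f (erec f y))
      = {q : ℝ × ℝ × ℝ | q.2.2 = 0 ∧ erec (econj f) 0 (-q.1) ≤ (q.2.1 : EReal)}
        ∪ {q : ℝ × ℝ × ℝ |
            0 < q.2.2 ∧ econj f (-q.1 / q.2.2) ≤ ((q.2.1 / q.2.2 : ℝ) : EReal)} := by
    ext ⟨q₁, q₂, q₃⟩
    simp only [Set.mem_union, Set.mem_setOf_eq, dual3]
    constructor
    · intro hq
      -- first, q₃ ≥ 0
      have hq₃ : 0 ≤ q₃ := by
        by_contra hneg
        push_neg at hneg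
        obtain ⟨n, hn⟩ := exists_nat_gt ((y * q₁ + q₂ + fy * q₃) / (-q₃))
        have hmem : ((y, 1, fy + n) : ℝ × ℝ × ℝ) ∈ perspEpi f (erec f y) := by
          rw [mem_epi_pos one_pos]
          show ((1 : ℝ) : EReal) * f (y / 1) ≤ _
          rw [div_one, hfy', ← EReal.coe_mul, EReal.coe_le_coe_iff]
          show (1 : ℝ) * fy ≤ fy + (n : ℝ)
          nlinarith [Nat.cast_nonneg (α := ℝ) n]
        have h1 := hq _ hmem
        rw [div_lt_iff₀ (by linarith : (0:ℝ) < -q₃)] at hn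
        simp only at h1
        nlinarith
      rcases eq_or_lt_of_le hq₃ with h3 | h3
      · -- q₃ = 0 : left component
        left
        refine ⟨h3.symm, rec_conj_backward f hbot hy h0 h0' ?_⟩
        intro u hu
        set v := (f u).toReal with hv
        have hv' : f u = (v : EReal) := (EReal.coe_toReal hu (hbot u)).symm
        have hmem : ((u, 1, v) : ℝ × ℝ × ℝ) ∈ perspEpi f (erec f y) := by
          rw [mem_epi_pos one_pos]
          show ((1 : ℝ) : EReal) * f (u / 1) ≤ _
          rw [div_one, hv', ← EReal.coe_mul, EReal.coe_le_coe_iff]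
          show (1 : ℝ) * v ≤ v
          linarith
        have h1 := hq _ hmem
        simp only at h1
        rw [← h3] at h1
        nlinarith
      · -- q₃ > 0 : right component
        right
        refine ⟨h3, iSup_le fun u => ?_⟩
        rcases eq_or_ne (f u) ⊤ with htop | hne
        · rw [htop, EReal.sub_top]; exact bot_le
        · set v := (f u).toReal with hv
          have hv' : f u = (v : EReal) := (EReal.coe_toReal hne (hbot u)).symm
          have hmem : ((u, 1, v) : ℝ × ℝ × ℝ) ∈ perspEpi f (erec f y) := by
            rw [mem_epi_pos one_pos]
            show ((1 : ℝ) : EReal) * f (u / 1) ≤ _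
            rw [div_one, hv', ← EReal.coe_mul, EReal.coe_le_coe_iff]
            show (1 : ℝ) * v ≤ v
            linarith
          have h1 := hq _ hmem
          simp only at h1
          rw [hv', ← EReal.coe_sub, EReal.coe_le_coe_iff, le_div_iff₀ h3]
          have e : (u * (-q₁ / q₃) - v) * q₃ = -(u * q₁) - v * q₃ := by
            field_simp
          rw [e]
          linarith
    · rintro (⟨h30, hA⟩ | ⟨h3, hB⟩)
      · -- q₃ = 0 case
        rintro ⟨p₁, t, r⟩ hp
        simp only
        rcases lt_trichotomy 0 t with ht | ht | ht
        · rw [mem_epi_pos ht] at hp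
          have hne : f (p₁ / t) ≠ ⊤ := by
            intro htop
            rw [htop, EReal.coe_mul_top_of_pos ht] at hp
            exact (EReal.coe_lt_top r).not_ge hp
          have h5 := rec_conj_forward f hbot h0 h0' hA hne
          rw [div_mul_eq_mul_div, div_le_iff₀ ht] at h5
          rw [h30]
          nlinarith
        · subst h30
          rw [mem_epi_zero ht.symm] at hp
          have key : 0 ≤ p₁ * q₁ := by
            refine lim_aux (a := y * q₁ + q₂) (b := 0) fun s hs => ?_
            have hdom := dom_ray f hy hy' hp hs
            have hk := rec_conj_forward f hbot h0 h0' hA hdom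
            have h7 : 0 ≤ p₁ * q₁ * s + (y * q₁ + q₂) := by nlinarith
            have h8 := div_nonneg h7 hs.le
            rwa [add_div, mul_div_cancel_right₀ _ hs.ne'] at h8
          rw [← ht]
          nlinarith
        · exact absurd hp (mem_epi_neg ht)
      · -- q₃ > 0 case
        rintro ⟨p₁, t, r⟩ hp
        simp only
        have hne3 : q₃ ≠ 0 := h3.ne'
        have hzT : econj f (-q₁ / q₃) ≠ ⊤ := fun htop => by
          rw [htop] at hB; exact (EReal.coe_lt_top _).not_ge hB
        rcases lt_trichotomy 0 t with ht | ht | ht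
        · rw [mem_epi_pos ht] at hp
          simp only at hp
          rw [emul_le_iff ht (hbot _)] at hp
          have hne : f (p₁ / t) ≠ ⊤ := fun htop => by
            rw [htop] at hp; exact (EReal.coe_lt_top _).not_ge hp
          set v := (f (p₁ / t)).toReal with hv
          have hv' : f (p₁ / t) = (v : EReal) := (EReal.coe_toReal hne (hbot _)).symm
          have hv0 : 0 ≤ v := by
            have := hNonneg (p₁ / t)
            rwa [hv', ← EReal.coe_zero, EReal.coe_le_coe_iff] at this
          have hv1 : v ≤ r / t := by rwa [hv', EReal.coe_le_coe_iff] at hp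
          have h8 : p₁ / t * (-q₁ / q₃) - v ≤ q₂ / q₃ := by
            have := le_trans (le_econj f (p₁ / t) (-q₁ / q₃)) hB
            rwa [hv', ← EReal.coe_sub, EReal.coe_le_coe_iff] at this
          have h9 := mul_le_mul_of_nonneg_right h8 (le_of_lt (mul_pos ht h3))
          have e1 : (p₁ / t * (-q₁ / q₃) - v) * (t * q₃) = -(p₁ * q₁) - v * t * q₃ := by
            field_simp
          have e2 : q₂ / q₃ * (t * q₃) = q₂ * t := by field_simp; all_goals ring
          rw [e1, e2] at h9
          have h10 : v * t ≤ r := by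
            rw [le_div_iff₀ ht] at hv1; linarith
          nlinarith [mul_le_mul_of_nonneg_right h10 h3.le]
        · rw [mem_epi_zero ht.symm] at hp
          have hzp := le_trans (coe_le_erec f hy hy' hbot hzT p₁) hp
          rw [EReal.coe_le_coe_iff] at hzp
          have h9 := mul_le_mul_of_nonneg_right hzp h3.le
          have e1 : -q₁ / q₃ * p₁ * q₃ = -(q₁ * p₁) := by field_simp
          rw [e1] at h9
          rw [← ht]
          nlinarith
        · exact absurd hp (mem_epi_neg ht)
  refine ⟨hEq, fun p => ?_⟩
  obtain ⟨p₁, t, r⟩ := p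
  rw [hEq]
  simp only [Set.mem_union, Set.mem_setOf_eq, neg_neg]
  rcases lt_trichotomy 0 t with ht | ht | ht
  · rw [mem_epi_pos ht]
    simp only
    rw [emul_le_iff ht (hcb _)]
    constructor
    · intro h; exact Or.inr ⟨ht, h⟩
    · rintro (⟨h1, _⟩ | ⟨_, h2⟩)
      · exact absurd h1 ht.ne'
      · exact h2
  · rw [mem_epi_zero ht.symm]
    constructor
    · intro h; exact Or.inl ⟨ht.symm, h⟩
    · rintro (⟨_, h2⟩ | ⟨h1, _⟩)
      · exact h2
      · rw [← ht] at h1; exact absurd h1 (lt_irrefl 0)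
  · constructor
    · intro h; exact absurd h (mem_epi_neg ht)
    · rintro (⟨h1, _⟩ | ⟨h1, _⟩)
      · rw [h1] at ht; exact absurd ht (lt_irrefl 0)
      · exact absurd (h1.trans ht) (lt_irrefl 0)
end
end

section
/- Let f : ℝ → ℝ₊ ∪ {∞} be a nonnegative, proper, closed, convex Legendre function and let K = epi f^π ⊂ ℝ³ be the perspective cone. Let z* = t*(−β, f*(β), 1) with β ∈ int(dom f*) and t* > 0. Then the exposed face K ∩ {z*}^⊥ equals the ray {t·(β̄, 1, f(β̄)) : t ≥ 0}, where β̄ = (f*)'(β). -/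
open Set Filter Topology

noncomputable section

private lemma tendsto_of_approx_subgrad (g : ℝ → ℝ) (β βbar h0 : ℝ) (hh0 : 0 < h0)
    (hder : HasDerivAt g βbar β)
    (x : ℕ → ℝ) (δ : ℕ → ℝ) (hδ0 : ∀ n, 0 ≤ δ n) (hδ : Tendsto δ atTop (𝓝 0))
    (hsub : ∀ n, ∀ h : ℝ, |h| ≤ h0 → x n * h ≤ g (β + h) - g β + δ n) :
    Tendsto x atTop (𝓝 βbar) := by
  rw [Metric.tendsto_atTop]
  intro ε hε
  have hslope := hasDerivAt_iff_tendsto_slope.1 hder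
  rw [Metric.tendsto_nhdsWithin_nhds] at hslope
  obtain ⟨d, hd, hdprop⟩ := hslope (ε/4) (by linarith)
  set h : ℝ := min h0 (d/2) with hh
  have hhpos : 0 < h := lt_min hh0 (by linarith)
  have hhle : |h| ≤ h0 := by rw [abs_of_pos hhpos]; exact min_le_left _ _
  have hhle' : |(-h)| ≤ h0 := by rw [abs_neg]; exact hhle
  have hsl1 : |(g (β + h) - g β)/h - βbar| < ε/4 := by
    have := hdprop (x := β + h) (by simp [hhpos.ne']) (by
      simp [Real.dist_eq, abs_of_pos hhpos]
      calc h ≤ d/2 := min_le_right _ _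
        _ < d := by linarith)
    rw [slope_def_field] at this
    simpa [Real.dist_eq] using this
  have hsl2 : |(g (β + -h) - g β)/(-h) - βbar| < ε/4 := by
    have := hdprop (x := β + -h) (by simp [hhpos.ne']) (by
      simp [Real.dist_eq, abs_of_pos hhpos]
      calc h ≤ d/2 := min_le_right _ _
        _ < d := by linarith)
    rw [slope_def_field] at this
    simpa [Real.dist_eq] using this
  rw [Metric.tendsto_atTop] at hδ
  obtain ⟨N, hN⟩ := hδ (ε/4 * h) (by positivity)
  refine ⟨N, fun n hn => ?_⟩
  have hδn : δ n < ε/4 * h := by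
    have := hN n hn; rw [Real.dist_eq, sub_zero, abs_of_nonneg (hδ0 n)] at this; exact this
  have h1 : x n * h ≤ g (β + h) - g β + δ n := hsub n h hhle
  have h2 : x n * (-h) ≤ g (β + -h) - g β + δ n := hsub n (-h) hhle'
  rw [Real.dist_eq, abs_lt]
  have e1 : (g (β + h) - g β)/h < βbar + ε/4 := by
    have := (abs_lt.1 hsl1).2; linarith
  have e2 : βbar - ε/4 < (g (β + -h) - g β)/(-h) := by
    have := (abs_lt.1 hsl2).1; linarith
  constructor
  · have h2' : -(x n) * h ≤ g (β + -h) - g β + δ n := by linarith [h2]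
    have hx : x n ≥ -((g (β + -h) - g β + δ n)/h) := by
      rw [ge_iff_le, neg_le]
      exact (le_div_iff₀ hhpos).2 h2'
    have e3 : (g (β + -h) - g β)/(-h) = -((g (β + -h) - g β)/h) := by ring
    rw [e3] at e2
    have e4 : -((g (β + -h) - g β + δ n)/h) = -((g (β + -h) - g β)/h) - δ n / h := by ring
    rw [e4] at hx
    have hδh : δ n / h < ε/4 := (div_lt_iff₀ hhpos).2 (by linarith)
    linarith
  · have hx : x n ≤ (g (β + h) - g β + δ n)/h := (le_div_iff₀ hhpos).2 h1
    have e4 : (g (β + h) - g β + δ n)/h = (g (β + h) - g β)/h + δ n / h := by ring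
    have hδh : δ n / h < ε/4 := (div_lt_iff₀ hhpos).2 (by linarith)
    linarith [e4 ▸ hx]

/-- For a nonnegative Legendre `f`, with
`z* = t*(−β, f*(β), 1)`, `β ∈ int(dom f*)`, `t* > 0`, the exposed face
`epi f^π ∩ {z*}^⊥` is the ray `{t·(β̄, 1, f(β̄)) : t ≥ 0}` where `β̄ = (f*)'(β)`. -/
theorem exposed_face_ray (f : ℝ → EReal) (hNonneg : ∀ x, 0 ≤ f x)
    (hLeg : ELegendre f) (y : ℝ) (hy : y ∈ EDom f)
    (β βbar tstar : ℝ) (htstar : 0 < tstar)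
    (hβ : β ∈ interior (EDom (econj f)))
    (hβbar : HasDerivAt (fun w => (econj f w).toReal) βbar β) :
    perspEpi f (erec f y) ∩
        {p : ℝ × ℝ × ℝ |
          p.1 * (-(tstar * β)) + p.2.1 * (tstar * (econj f β).toReal)
            + p.2.2 * tstar = 0}
      = {p : ℝ × ℝ × ℝ | ∃ t : ℝ, 0 ≤ t ∧ p = (t * βbar, t, t * (f βbar).toReal)} := by
  classical
  obtain ⟨_, hlsc, _, _, _⟩ := hLeg
  -- basic finiteness facts
  have hfb : ∀ x, f x ≠ ⊥ := fun x =>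
    ((lt_of_lt_of_le (by simp) (hNonneg x)) : (⊥ : EReal) < f x).ne'
  set fy : ℝ := (f y).toReal with hfydef
  have hfy : f y = (fy : EReal) := (EReal.coe_toReal hy (hfb y)).symm
  have FY : ∀ x w : ℝ, ((x * w : ℝ) : EReal) - f x ≤ econj f w := fun x w =>
    le_iSup (fun x => ((x * w : ℝ) : EReal) - f x) x
  have hconj_ne_bot : ∀ w, econj f w ≠ ⊥ := by
    intro w hbot
    have h1 := FY y w
    rw [hbot, le_bot_iff, hfy, ← EReal.coe_sub] at h1
    exact EReal.coe_ne_bot _ h1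
  have FYreal : ∀ x w : ℝ, f x ≠ ⊤ → econj f w ≠ ⊤ →
      x * w - (f x).toReal ≤ (econj f w).toReal := by
    intro x w hx hw
    have h1 := FY x w
    rw [(EReal.coe_toReal hx (hfb x)).symm, ← EReal.coe_sub,
      (EReal.coe_toReal hw (hconj_ne_bot w)).symm] at h1
    exact_mod_cast h1
  set g : ℝ → ℝ := fun w => (econj f w).toReal with hgdef
  have hgβ : econj f β = ((g β : ℝ) : EReal) :=
    (EReal.coe_toReal (interior_subset hβ) (hconj_ne_bot β)).symm
  -- a ball inside the interior of the domain of the conjugate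
  obtain ⟨ε0, hε0, hball⟩ := Metric.isOpen_iff.1 isOpen_interior β hβ
  set h0 : ℝ := ε0 / 2 with hh0def
  have hh0 : 0 < h0 := by positivity
  have hmem : ∀ h : ℝ, |h| ≤ h0 → β + h ∈ interior (EDom (econj f)) := by
    intro h hle
    apply hball
    rw [Metric.mem_ball, Real.dist_eq, add_sub_cancel_left]
    linarith [abs_nonneg h]
  have hmemdom : ∀ h : ℝ, |h| ≤ h0 → econj f (β + h) ≠ ⊤ := fun h hle =>
    interior_subset (hmem h hle)
  -- uniqueness: exact Fenchel-Young equality forces the point to be βbar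
  have uniq : ∀ u : ℝ, f u ≠ ⊤ → u * β - (f u).toReal = g β → u = βbar := by
    intro u hu hequ
    have htend : Tendsto (fun _ : ℕ => u) atTop (𝓝 βbar) := by
      apply tendsto_of_approx_subgrad g β βbar h0 hh0 hβbar _ (fun _ => 0)
        (fun _ => le_refl 0) tendsto_const_nhds
      intro n h hle
      have h1 := FYreal u (β + h) hu (hmemdom h hle)
      simp only [hgdef] at h1 ⊢
      nlinarith [h1, hequ]
    exact (tendsto_nhds_unique tendsto_const_nhds htend)
  -- key equation : f βbar = βbar * β - f*(β)
  have hex : ∀ n : ℕ, ∃ x : ℝ, ((g β - 1/(n+1) : ℝ) : EReal) < ((x * β : ℝ) : EReal) - f x := by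
    intro n
    have hlt : ((g β - 1/(n+1) : ℝ) : EReal) < econj f β := by
      rw [hgβ]
      exact_mod_cast sub_lt_self (g β) (by positivity)
    simp only [econj] at hlt
    exact lt_iSup_iff.1 hlt
  choose xs hxs using hex
  have hxs_ne_top : ∀ n, f (xs n) ≠ ⊤ := by
    intro n htop
    have h1 := hxs n
    rw [htop] at h1
    simp at h1
  have hxs_real : ∀ n, g β - 1/(n+1) < xs n * β - (f (xs n)).toReal := by
    intro n
    have h1 := hxs n
    rw [(EReal.coe_toReal (hxs_ne_top n) (hfb _)).symm, ← EReal.coe_sub] at h1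
    exact_mod_cast h1
  have hxs_tend : Tendsto xs atTop (𝓝 βbar) := by
    apply tendsto_of_approx_subgrad g β βbar h0 hh0 hβbar xs (fun n => 1/(n+1))
      (fun n => by positivity) tendsto_one_div_add_atTop_nhds_zero_nat
    intro n h hle
    have h1 := FYreal (xs n) (β + h) (hxs_ne_top n) (hmemdom h hle)
    have h2 := hxs_real n
    simp only [hgdef] at h1 ⊢
    nlinarith [h1, h2]
  have hub : f βbar ≤ ((βbar * β - g β : ℝ) : EReal) := by
    by_contra hcon
    push_neg at hcon
    obtain ⟨d, hd1, hd2⟩ := exists_between hcon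
    have hdne_top : d ≠ ⊤ := hd2.ne_top
    have hdne_bot : d ≠ ⊥ := by
      intro hb; rw [hb] at hd1; exact (not_lt_bot hd1)
    set dr := d.toReal with hdrdef
    have hdcoe : d = (dr : EReal) := (EReal.coe_toReal hdne_top hdne_bot).symm
    have hev : ∀ᶠ z in 𝓝 βbar, d < f z := hlsc βbar d hd2
    have hev2 : ∀ᶠ n in atTop, d < f (xs n) := hxs_tend.eventually hev
    have hbr : βbar * β - g β < dr := by
      rw [hdcoe] at hd1; exact_mod_cast hd1
    have htt : Tendsto (fun n : ℕ => xs n * β - g β + 1/(n+1)) atTop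
        (𝓝 (βbar * β - g β + 0)) :=
      ((hxs_tend.mul_const β).sub_const (g β)).add tendsto_one_div_add_atTop_nhds_zero_nat
    rw [add_zero] at htt
    have hev3 : ∀ᶠ n : ℕ in atTop, xs n * β - g β + 1/(n+1) < dr :=
      htt.eventually (eventually_lt_nhds hbr)
    obtain ⟨n, hn1, hn2⟩ := (hev2.and hev3).exists
    rw [hdcoe, (EReal.coe_toReal (hxs_ne_top n) (hfb _)).symm, EReal.coe_lt_coe_iff] at hn1
    have := hxs_real n
    linarith
  have hne_top_bar : f βbar ≠ ⊤ := by
    intro htop; rw [htop, top_le_iff] at hub; exact EReal.coe_ne_top _ hub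
  have hub' : (f βbar).toReal ≤ βbar * β - g β := by
    rw [(EReal.coe_toReal hne_top_bar (hfb βbar)).symm, EReal.coe_le_coe_iff] at hub
    exact hub
  have hlb := FYreal βbar β hne_top_bar (interior_subset hβ)
  have hkey : (f βbar).toReal = βbar * β - g β := by
    simp only [hgdef] at hub' ⊢; linarith
  have hfbar : f βbar = ((βbar * β - g β : ℝ) : EReal) := by
    rw [← hkey]; exact (EReal.coe_toReal hne_top_bar (hfb βbar)).symm
  have hgβ' : (econj f β).toReal = g β := rfl
  -- main set equality
  ext p
  obtain ⟨x, t, r⟩ := p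
  simp only [Set.mem_inter_iff, Set.mem_setOf_eq, perspEpi]
  constructor
  · rintro ⟨hepi, horth⟩
    have hr : r = x * β - t * g β := by
      have h1 : tstar * (r - (x * β - t * g β)) = 0 := by
        rw [← horth, hgβ']; ring
      have h2 := (mul_eq_zero.1 h1).resolve_left (ne_of_gt htstar)
      linarith
    rcases lt_trichotomy 0 t with ht | ht | ht
    · -- t > 0
      rw [persp, if_pos ht] at hepi
      set u := x / t with hu
      have hxtu : x = t * u := by rw [hu]; field_simp
      have hfu_ne : f u ≠ ⊤ := by
        intro htop
        rw [htop, EReal.coe_mul_top_of_pos ht, top_le_iff] at hepi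
        exact EReal.coe_ne_top _ hepi
      have hfu : f u = ((f u).toReal : EReal) := (EReal.coe_toReal hfu_ne (hfb u)).symm
      have hepi' : t * (f u).toReal ≤ r := by
        rw [hfu, ← EReal.coe_mul] at hepi; exact_mod_cast hepi
      have hFY := FYreal u β hfu_ne (interior_subset hβ)
      rw [hgβ'] at hFY
      have hxβ : x * β = t * (u * β) := by rw [hxtu]; ring
      have h3 : t * (u * β - g β) ≤ t * (f u).toReal := by nlinarith [hFY]
      have h4 : t * (f u).toReal ≤ t * (u * β - g β) := by
        have : t * (u * β - g β) = x * β - t * g β := by rw [hxβ]; ring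
        linarith [hepi', hr]
      have heq : (f u).toReal = u * β - g β :=
        mul_left_cancel₀ (ne_of_gt ht) (le_antisymm h4 h3)
      have huβ : u = βbar := uniq u hfu_ne (by linarith)
      refine ⟨t, ht.le, ?_⟩
      simp only [Prod.mk.injEq]
      refine ⟨by rw [hxtu, huβ], by trivial, ?_⟩
      rw [hkey, hr, hxtu, huβ]; ring
    · -- t = 0
      subst ht
      rw [persp, if_neg (lt_irrefl 0), if_pos rfl] at hepi
      rw [zero_mul, sub_zero] at hr
      have hxw : ∀ h : ℝ, |h| ≤ h0 → x * (β + h) ≤ r := by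
        intro h hle
        obtain ⟨w, hw⟩ : ∃ w : ℝ, w = β + h := ⟨_, rfl⟩
        have hcw_ne : econj f w ≠ ⊤ := by rw [hw]; exact hmemdom h hle
        obtain ⟨cw, hcwdef⟩ : ∃ cw : ℝ, cw = (econj f w).toReal := ⟨_, rfl⟩
        suffices hsuff : x * w ≤ r by rw [hw] at hsuff; exact hsuff
        by_contra hcon
        push_neg at hcon
        obtain ⟨ε, hεdef⟩ : ∃ ε : ℝ, ε = (x * w - r) / 2 := ⟨_, rfl⟩
        have hε : 0 < ε := by rw [hεdef]; linarith
        obtain ⟨K, hKdef⟩ : ∃ K : ℝ, K = y * w - cw - fy := ⟨_, rfl⟩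
        obtain ⟨T, hTdef⟩ : ∃ T : ℝ, T = |K| / ε + 1 := ⟨_, rfl⟩
        have hT : 0 < T := by rw [hTdef]; positivity
        have hTε : T * ε = |K| + ε := by rw [hTdef]; field_simp
        have hterm : ((x * w - ε : ℝ) : EReal) ≤
            (((T : ℝ)⁻¹ : ℝ) : EReal) * (f (y + T * x) - f y) := by
          by_cases htop : f (y + T * x) = ⊤
          · rw [htop, hfy, EReal.top_sub_coe, EReal.coe_mul_top_of_pos (by positivity)]
            exact le_top
          · set a := (f (y + T * x)).toReal with hadef
            have hacoe : f (y + T * x) = (a : EReal) :=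
              (EReal.coe_toReal htop (hfb _)).symm
            have hFYa := FYreal (y + T * x) w htop hcw_ne
            rw [← hcwdef] at hFYa
            rw [hacoe, hfy, ← EReal.coe_sub, ← EReal.coe_mul, EReal.coe_le_coe_iff]
            have h5 : (x * w - ε) * T ≤ a - fy := by nlinarith [neg_abs_le K, hKdef, hTε]
            have h6 : T⁻¹ * (a - fy) ≥ T⁻¹ * ((x * w - ε) * T) :=
              mul_le_mul_of_nonneg_left h5 (by positivity)
            have h7 : T⁻¹ * ((x * w - ε) * T) = x * w - ε := by field_simp
            linarith [h7 ▸ h6]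
        have herle : (((T : ℝ)⁻¹ : ℝ) : EReal) * (f (y + T * x) - f y) ≤ erec f y x :=
          le_iSup (fun t : {t : ℝ // 0 < t} =>
            ((((t : ℝ)⁻¹ : ℝ) : EReal)) * (f (y + (t : ℝ) * x) - f y)) ⟨T, hT⟩
        have hfin : ((x * w - ε : ℝ) : EReal) ≤ (r : EReal) :=
          le_trans (le_trans hterm herle) hepi
        rw [EReal.coe_le_coe_iff, hεdef] at hfin
        linarith
      have hp := hxw h0 (by rw [abs_of_pos hh0])
      have hm := hxw (-h0) (by rw [abs_neg, abs_of_pos hh0])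
      have hx0 : x = 0 := by nlinarith [hp, hm, hr]
      refine ⟨0, le_refl 0, ?_⟩
      simp only [Prod.mk.injEq, zero_mul]
      exact ⟨hx0, by trivial, by rw [hr, hx0, zero_mul]⟩
    · -- t < 0
      rw [persp, if_neg (by linarith), if_neg (by linarith)] at hepi
      exact absurd hepi (by simp)
  · rintro ⟨s, hs, heqp⟩
    rw [Prod.mk.injEq, Prod.mk.injEq] at heqp
    obtain ⟨hx, ht', hr'⟩ := heqp
    subst hx; subst ht'; subst hr'
    constructor
    · rcases hs.eq_or_lt with hs0 | hs0
      · rw [← hs0]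
        rw [persp, if_neg (lt_irrefl 0), if_pos rfl]
        have : erec f y (0 * βbar) ≤ (0 : EReal) := by
          rw [zero_mul]
          apply iSup_le
          rintro ⟨t, ht⟩
          rw [mul_zero, add_zero, hfy, ← EReal.coe_sub, sub_self]
          simp
        refine le_trans this ?_
        simp
      · rw [persp, if_pos hs0, mul_div_cancel_left₀ _ (ne_of_gt hs0), hfbar,
          ← EReal.coe_mul, EReal.coe_le_coe_iff, EReal.toReal_coe]
    · rw [hkey, hgβ']; ring
end
end

section
/- Let f : ℝ → ℝ₊ ∪ {∞} be a nonnegative, proper, closed, convex Legendre function with perspective cone K = epi f^π ⊂ ℝ³. Let z* = (−x*, s*, 0) with x* ≠ 0 and s* = (f*)_∞(x*) < ∞. Then the exposed face K ∩ {z*}^⊥ equals {(x,t,r) : x = αt, t ≥ 0, r ≥ t·f(α)}, where α is the unique point of bdry(dom f) ∩ dom f with x* ∈ N_{dom f}(α). -/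
open Set Filter Topology

noncomputable section

/-! Here `f*(0)` is a real number `c`, and then `(f*)_∞(x*) ≤ M` says exactly
that `f*(t x*) ≤ c + t M` for all `t > 0`. Fenchel–Young, `f*(t x*) ≥ t x* w − f(w)`, then forces
`x* w ≤ s*` on `dom f`, while the normal-cone condition `x* w ≤ x* α` gives `f*(t x*) ≤ c + t x* α`.
Hence `s* = x* α`, the hyperplane `{z*}^⊥` is `{x = α t}`, and the face is read off from the three
branches of the perspective function. -/

theorem EReal.coe_inv_mul_sub_coe_le_iff {t c M : ℝ} (ht : 0 < t) (x : EReal) :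
    ((t⁻¹ : ℝ) : EReal) * (x - c) ≤ M ↔ x ≤ ((c + t * M : ℝ) : EReal) := by
  have ht' : (0 : EReal) < ((t⁻¹ : ℝ) : EReal) := EReal.coe_pos.2 (inv_pos.2 ht)
  induction x using EReal.rec with
  | bot => simp [EReal.mul_bot_of_pos ht']
  | top => simp [EReal.mul_top_of_pos ht', -EReal.coe_add]
  | coe x =>
    rw [← EReal.coe_sub, ← EReal.coe_mul, EReal.coe_le_coe_iff, EReal.coe_le_coe_iff,
      inv_mul_le_iff₀ ht]
    constructor <;> intro h <;> linarith

theorem le_of_forall_pos_mul_le_mul_add {a b K : ℝ} (h : ∀ t > 0, t * a ≤ t * b + K) :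
    a ≤ b := by
  by_contra! hba
  have hpos : 0 < a - b := sub_pos.2 hba
  have := h ((|K| + 1) / (a - b)) (by positivity)
  have hcancel : (|K| + 1) / (a - b) * (a - b) = |K| + 1 := div_mul_cancel₀ _ hpos.ne'
  nlinarith [le_abs_self K]

theorem erec_le_coe_iff {h : ℝ → EReal} {y c : ℝ} (hy : h y = c) (d M : ℝ) :
    erec h y d ≤ M ↔ ∀ t > 0, h (y + t * d) ≤ ((c + t * M : ℝ) : EReal) := by
  simp only [erec, iSup_le_iff, Subtype.forall, hy]
  exact forall₂_congr fun t ht => EReal.coe_inv_mul_sub_coe_le_iff ht _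

theorem erec_zero_right {h : ℝ → EReal} {y c : ℝ} (hy : h y = c) : erec h y 0 = 0 := by
  refine le_antisymm ?_ ?_
  · exact (erec_le_coe_iff hy 0 0).2 fun t _ => by simp [hy]
  · refine le_trans ?_ (le_iSup _ (⟨1, one_pos⟩ : {t : ℝ // 0 < t}))
    simp [hy]

theorem coe_mul_sub_le_econj (h : ℝ → EReal) (x y : ℝ) :
    ((x * y : ℝ) : EReal) - h x ≤ econj h y :=
  le_iSup (fun x => ((x * y : ℝ) : EReal) - h x) x

theorem econj_mul_le {h : ℝ → EReal} {d M t : ℝ} (hM : ∀ w ∈ EDom h, d * w ≤ M) (ht : 0 ≤ t) :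
    econj h (t * d) ≤ ((t * M : ℝ) : EReal) + econj h 0 := by
  refine iSup_le fun w => ?_
  by_cases hw : w ∈ EDom h
  · have hle : ((w * (t * d) : ℝ) : EReal) ≤ ((t * M : ℝ) : EReal) :=
      EReal.coe_le_coe_iff.2 (by nlinarith [hM w hw])
    calc ((w * (t * d) : ℝ) : EReal) - h w ≤ ((t * M : ℝ) : EReal) - h w :=
          EReal.sub_le_sub hle le_rfl
      _ = ((t * M : ℝ) : EReal) + (((w * 0 : ℝ) : EReal) - h w) := by
          simp [sub_eq_add_neg]
      _ ≤ ((t * M : ℝ) : EReal) + econj h 0 := add_le_add_right (coe_mul_sub_le_econj h w 0) _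
  · simp only [EDom, mem_ofPred_eq, not_not] at hw
    simp [hw]

theorem mul_le_of_erec_econj_le {h : ℝ → EReal} {c b d s w : ℝ} (hc : econj h 0 = c)
    (hw : h w = b) (hs : erec (econj h) 0 d ≤ s) : d * w ≤ s := by
  have hgrowth := (erec_le_coe_iff hc d s).1 hs
  refine le_of_forall_pos_mul_le_mul_add (K := b + c) fun t ht => ?_
  have hyoung := coe_mul_sub_le_econj h w (t * d)
  rw [hw, ← EReal.coe_sub] at hyoung
  have := EReal.coe_le_coe_iff.1 (hyoung.trans (by simpa only [zero_add] using hgrowth t ht))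
  linarith

theorem erec_econj_le_of_forall_mul_le {h : ℝ → EReal} {c d M : ℝ} (hc : econj h 0 = c)
    (hM : ∀ w ∈ EDom h, d * w ≤ M) : erec (econj h) 0 d ≤ M := by
  refine (erec_le_coe_iff hc d M).2 fun t ht => ?_
  simpa [hc, add_comm] using econj_mul_le hM ht.le

theorem perspEpi_inter_eq {f finf : ℝ → EReal} {a α : ℝ} (ha : a ≠ 0) (hfinf : finf 0 = 0) :
    perspEpi f finf ∩ {p : ℝ × ℝ × ℝ | p.1 * (-a) + p.2.1 * (a * α) = 0}
      = {p : ℝ × ℝ × ℝ | 0 ≤ p.2.1 ∧ p.1 = α * p.2.1 ∧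
          (p.2.1 : EReal) * f α ≤ (p.2.2 : EReal)} := by
  ext ⟨x, t, r⟩
  have hplane : x * (-a) + t * (a * α) = 0 ↔ x = α * t := by
    rw [← sub_eq_zero (a := x)]
    constructor <;> intro h
    · exact (mul_eq_zero.1 (by linarith : a * (x - α * t) = 0)).resolve_left ha
    · linear_combination -a * h
  simp only [perspEpi, persp, mem_inter_iff, mem_ofPred_eq, hplane]
  by_cases hx : x = α * t
  · subst hx
    rcases lt_trichotomy t 0 with ht | rfl | ht
    · simp [not_lt.2 ht.le, ht.ne, not_le.2 ht]
    · simp [hfinf]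
    · simp [ht, ht.le, mul_div_cancel_right₀ _ ht.ne']
  · simp [hx]

theorem exposed_face_halfplane_general (f : ℝ → EReal) (hNonneg : ∀ x, 0 ≤ f x)
    (y : ℝ) (hy : y ∈ EDom f)
    (h0 : (0 : ℝ) ∈ EDom (econj f))
    (xstar sstar α : ℝ) (hx : xstar ≠ 0)
    (hs : erec (econj f) 0 xstar = (sstar : EReal))
    (hα : α ∈ frontier (EDom f) ∩ EDom f)
    (hNormal : ∀ w ∈ EDom f, xstar * (w - α) ≤ 0) :
    perspEpi f (erec f y) ∩
        {p : ℝ × ℝ × ℝ | p.1 * (-xstar) + p.2.1 * sstar = 0}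
      = {p : ℝ × ℝ × ℝ | 0 ≤ p.2.1 ∧ p.1 = α * p.2.1 ∧
          (p.2.1 : EReal) * f α ≤ (p.2.2 : EReal)} := by
  have hreal : ∀ w ∈ EDom f, f w = ((f w).toReal : EReal) := fun w hw =>
    (EReal.coe_toReal hw (EReal.bot_lt_zero.trans_le (hNonneg w)).ne').symm
  have hconj : econj f 0 = ((econj f 0).toReal : EReal) := by
    refine (EReal.coe_toReal h0 (ne_bot_of_le_ne_bot ?_ (coe_mul_sub_le_econj f y 0))).symm
    rw [hreal y hy, ← EReal.coe_sub]
    exact EReal.coe_ne_bot _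
  have hsstar : sstar = xstar * α := by
    refine le_antisymm ?_ (mul_le_of_erec_econj_le hconj (hreal α hα.2) hs.le)
    rw [← EReal.coe_le_coe_iff, ← hs]
    exact erec_econj_le_of_forall_mul_le hconj fun w hw => by linarith [hNormal w hw]
  rw [hsstar]
  exact perspEpi_inter_eq hx (erec_zero_right (hreal y hy))

/-- For a nonnegative Legendre `f`, with `z* = (−x*, s*, 0)`,
`x* ≠ 0`, `s* = (f*)_∞(x*) < ∞`, and `α` the (unique) point of
`bdry(dom f) ∩ dom f` with `x* ∈ N_{dom f}(α)`, the exposed face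
`epi f^π ∩ {z*}^⊥` equals `{(x,t,r) : x = αt, t ≥ 0, r ≥ t f(α)}`. -/
theorem exposed_face_halfplane (f : ℝ → EReal) (hNonneg : ∀ x, 0 ≤ f x)
    (hLeg : ELegendre f) (y : ℝ) (hy : y ∈ EDom f)
    (h0 : (0 : ℝ) ∈ EDom (econj f))
    (xstar sstar α : ℝ) (hx : xstar ≠ 0)
    (hs : erec (econj f) 0 xstar = (sstar : EReal))
    (hα : α ∈ frontier (EDom f) ∩ EDom f)
    (hNormal : ∀ w ∈ EDom f, xstar * (w - α) ≤ 0) :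
    perspEpi f (erec f y) ∩
        {p : ℝ × ℝ × ℝ | p.1 * (-xstar) + p.2.1 * sstar = 0}
      = {p : ℝ × ℝ × ℝ | 0 ≤ p.2.1 ∧ p.1 = α * p.2.1 ∧
          (p.2.1 : EReal) * f α ≤ (p.2.2 : EReal)} :=
  exposed_face_halfplane_general f hNonneg y hy h0 xstar sstar α hx hs hα hNormal
end
end

section
/- Let f : ℝ → ℝ₊ ∪ {∞} be nonnegative, proper, closed, convex, and suppose β ∈ bdry(dom f*) ∩ dom f*, where f* is a Legendre conjugate of a Legendre function f. Define R_β(x, ξ) = ξ + f*(β) − xβ and ϖ = max{ max{f*(y) : y ∈ bdry(dom f*) ∩ dom f*}, 0 }. If dom f* = [−a, b] for some a, b ≥ 0 with a + b > 0 (so dom f = ℝ and dom f_∞ = ℝ), then epi f + (0, ϖ) ⊆ epi f_∞, and consequently R_β(x, f(x)) + ϖ ≥ dist((x, f(x)), epi f_∞) for all x ∈ ℝ. -/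
open Set Filter Topology

noncomputable section

/-! Since `dom f* = [-a, b]`, every slope `s > b` has `f* s = ⊤`; a point `u` where `s u - f u`
is huge then caps, by convexity, the growth of `f` to the right of any `x` at slope `s`, hence
at slope `b` in the limit, and symmetrically at slope `a` to the left. So every difference
quotient of `f` in direction `x` is at most `max (b x) (-a x)`, which Fenchel–Young at `b` and
`-a` bounds by `f x + ϖ`: the point `(x, f x + ϖ)` lies in `epi f_∞`. It is at distance `ϖ`
from `(x, f x)`, and `R_β(x, f x) ≥ 0` is Fenchel–Young at `β`. -/

section

variable {f : ℝ → EReal}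

theorem coe_sub_le_econj {x r : ℝ} (s : ℝ) (hfx : f x ≤ r) :
    ((x * s - r : ℝ) : EReal) ≤ econj f s :=
  calc ((x * s - r : ℝ) : EReal) = ((x * s : ℝ) : EReal) - r := EReal.coe_sub _ _
    _ ≤ ((x * s : ℝ) : EReal) - f x := EReal.sub_le_sub le_rfl hfx
    _ ≤ econj f s := le_iSup (fun z => ((z * s : ℝ) : EReal) - f z) x

theorem mul_le_add_toReal_econj {x r s : ℝ} (hfx : f x ≤ r) (hs : econj f s ≠ ⊤) :
    x * s ≤ r + (econj f s).toReal := by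
  have h := coe_sub_le_econj s hfx
  rw [← EReal.coe_toReal hs (ne_bot_of_le_ne_bot (EReal.coe_ne_bot _) h),
    EReal.coe_le_coe_iff] at h
  linarith

theorem econj_comp_neg (s : ℝ) : econj (fun z => f (-z)) s = econj f (-s) := by
  refine le_antisymm (iSup_le fun x => ?_) (iSup_le fun x => ?_)
  · exact le_iSup_of_le (-x) (by dsimp only; rw [neg_mul_neg])
  · exact le_iSup_of_le (-x) (by dsimp only; rw [neg_neg, neg_mul, mul_neg])

theorem EConvexFn.comp_neg (hf : EConvexFn f) : EConvexFn (fun z => f (-z)) := by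
  intro x z p q hp hq hpq
  simpa only [mul_neg, neg_add] using hf (-x) (-z) p q hp hq hpq

theorem EConvexFn.le_chord (hf : EConvexFn f) {x w u r c : ℝ} (hxw : x < w) (hwu : w < u)
    (hx : f x ≤ r) (hu : f u ≤ c) :
    f w ≤ (((u - w) / (u - x) * r + (w - x) / (u - x) * c : ℝ) : EReal) := by
  have hux : 0 < u - x := by linarith
  have hA : 0 ≤ (u - w) / (u - x) := div_nonneg (by linarith) hux.le
  have hB : 0 ≤ (w - x) / (u - x) := div_nonneg (by linarith) hux.le
  have key := hf x u _ _ hA hB (by field_simp; ring)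
  rw [show (u - w) / (u - x) * x + (w - x) / (u - x) * u = w by field_simp; ring] at key
  refine key.trans ?_
  rw [EReal.coe_add, EReal.coe_mul, EReal.coe_mul]
  exact add_le_add (mul_le_mul_of_nonneg_left hx (EReal.coe_nonneg.mpr hA))
    (mul_le_mul_of_nonneg_left hu (EReal.coe_nonneg.mpr hB))

theorem erec_le_of_le_add_mul {y d c fy : ℝ} (hy : f y = fy)
    (h : ∀ t : ℝ, 0 < t → f (y + t * d) ≤ ((fy + t * c : ℝ) : EReal)) : erec f y d ≤ c := by
  refine iSup_le fun ⟨t, ht⟩ => ?_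
  have hdiff : f (y + t * d) - f y ≤ ((t * c : ℝ) : EReal) :=
    hy ▸ EReal.sub_le_of_le_add ((h t ht).trans_eq (by rw [EReal.coe_add, add_comm]))
  calc ((t⁻¹ : ℝ) : EReal) * (f (y + t * d) - f y)
      ≤ ((t⁻¹ : ℝ) : EReal) * ((t * c : ℝ) : EReal) :=
        mul_le_mul_of_nonneg_left hdiff (EReal.coe_nonneg.mpr (inv_pos.mpr ht).le)
    _ = c := by rw [← EReal.coe_mul, inv_mul_cancel_left₀ ht.ne']

variable (hconv : EConvexFn f) (hpos : ∀ z, 0 ≤ f z)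
include hconv hpos

theorem le_add_mul_of_econj_eq_top {s x w r : ℝ} (hs : 0 < s) (htop : econj f s = ⊤)
    (hxw : x < w) (hfx : f x ≤ r) : f w ≤ ((r + s * (w - x) : ℝ) : EReal) := by
  -- `s u - f u > s w` forces `u > w`, and `f u < s (u - x)` makes the chord from `x` to `u`
  -- pass below slope `s`.
  obtain ⟨u, hu⟩ :=
    iSup_eq_top.mp htop ((max (s * x) (s * w) : ℝ) : EReal) (EReal.coe_lt_top _)
  have hfu_top : f u ≠ ⊤ := fun h => by simp [h] at hu
  set c := (f u).toReal
  have hfu : f u = c :=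
    (EReal.coe_toReal hfu_top (ne_bot_of_le_ne_bot EReal.zero_ne_bot (hpos u))).symm
  rw [hfu, ← EReal.coe_sub, EReal.coe_lt_coe_iff, max_lt_iff] at hu
  have hc : 0 ≤ c := by exact_mod_cast hfu ▸ hpos u
  have hr : 0 ≤ r := by exact_mod_cast (hpos x).trans hfx
  have hwu : w < u := by nlinarith
  refine (hconv.le_chord hxw hwu hfx hfu.le).trans (EReal.coe_le_coe_iff.mpr ?_)
  have hux : 0 < u - x := by linarith
  rw [div_mul_eq_mul_div, div_mul_eq_mul_div, ← add_div, div_le_iff₀ hux]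
  nlinarith

theorem le_add_mul_of_forall_gt_econj_eq_top {b x w r : ℝ} (hb : 0 ≤ b)
    (htop : ∀ s, b < s → econj f s = ⊤) (hxw : x ≤ w) (hfx : f x ≤ r) :
    f w ≤ ((r + b * (w - x) : ℝ) : EReal) := by
  rcases hxw.eq_or_lt with rfl | hxw
  · simpa using hfx
  have hlim : Tendsto (fun s : ℝ => ((r + s * (w - x) : ℝ) : EReal)) (𝓝[>] b)
      (𝓝 ((r + b * (w - x) : ℝ) : EReal)) :=
    ((continuous_coe_real_ereal.comp (by fun_prop)).tendsto b).mono_left nhdsWithin_le_nhds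
  exact ge_of_tendsto hlim (eventually_nhdsWithin_of_forall fun s hs =>
    le_add_mul_of_econj_eq_top hconv hpos (hb.trans_lt hs) (htop s hs) hxw hfx)

theorem le_add_mul_of_forall_lt_econj_eq_top {a x w r : ℝ} (ha : 0 ≤ a)
    (htop : ∀ s, s < -a → econj f s = ⊤) (hwx : w ≤ x) (hfx : f x ≤ r) :
    f w ≤ ((r + a * (x - w) : ℝ) : EReal) := by
  have h := le_add_mul_of_forall_gt_econj_eq_top hconv.comp_neg (fun z => hpos (-z)) ha
    (fun s hs => (econj_comp_neg s).trans (htop (-s) (by linarith))) (neg_le_neg hwx)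
    (by simpa using hfx)
  simpa [neg_add_eq_sub] using h

theorem le_add_max_mul_of_edom_econj_eq_Icc {a b : ℝ} (ha : 0 ≤ a) (hb : 0 ≤ b)
    (hdom : EDom (econj f) = Icc (-a) b) {x r : ℝ} (hfx : f x ≤ r) (d : ℝ) :
    f (x + d) ≤ ((r + max (b * d) (-a * d) : ℝ) : EReal) := by
  have htop : ∀ s, s ∉ Icc (-a) b → econj f s = ⊤ := fun s hs => by
    rw [← hdom] at hs
    exact of_not_not hs
  rcases le_total 0 d with hd | hd
  · have h := le_add_mul_of_forall_gt_econj_eq_top hconv hpos hb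
      (fun s hs => htop s fun h => h.2.not_gt hs) (le_add_of_nonneg_right hd) hfx
    rw [add_sub_cancel_left] at h
    exact h.trans (EReal.coe_le_coe_iff.mpr (by gcongr; exact le_max_left _ _))
  · have h := le_add_mul_of_forall_lt_econj_eq_top hconv hpos ha
      (fun s hs => htop s fun h => h.1.not_gt hs) (add_le_of_nonpos_right hd) hfx
    rw [sub_add_cancel_left, mul_neg, ← neg_mul] at h
    exact h.trans (EReal.coe_le_coe_iff.mpr (by gcongr; exact le_max_right _ _))

end

theorem epi_shift_subset_and_dist_bound_general (f : ℝ → EReal) (hNonneg : ∀ x, 0 ≤ f x)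
    (hLeg : ELegendre f) (y : ℝ) (hy : y ∈ EDom f)
    (a b : ℝ) (ha : 0 ≤ a) (hb : 0 ≤ b)
    (hdom : EDom (econj f) = Set.Icc (-a) b)
    (β : ℝ) (hβ : β ∈ frontier (EDom (econj f)) ∩ EDom (econj f)) :
    (∀ x r : ℝ, f x ≤ (r : EReal) →
      erec f y x
        ≤ ((r + max (max ((econj f (-a)).toReal) ((econj f b).toReal)) 0 : ℝ) : EReal))
    ∧ ∀ x r : ℝ, f x = (r : EReal) →
        Metric.infDist ((x, r) : ℝ × ℝ) {q : ℝ × ℝ | erec f y q.1 ≤ (q.2 : EReal)}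
          ≤ r + (econj f β).toReal - x * β
            + max (max ((econj f (-a)).toReal) ((econj f b).toReal)) 0 := by
  set ϖ := max (max ((econj f (-a)).toReal) ((econj f b).toReal)) 0
  have hϖ : 0 ≤ ϖ := le_max_right _ _
  have hb_dom : econj f b ≠ ⊤ := show b ∈ EDom (econj f) by rw [hdom]; exact ⟨by linarith, le_rfl⟩
  have ha_dom : econj f (-a) ≠ ⊤ :=
    show -a ∈ EDom (econj f) by rw [hdom]; exact ⟨le_rfl, by linarith⟩
  have hfy : f y = (f y).toReal :=
    (EReal.coe_toReal hy (ne_bot_of_le_ne_bot EReal.zero_ne_bot (hNonneg y))).symm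
  have epi_shift : ∀ x r : ℝ, f x ≤ r → erec f y x ≤ ((r + ϖ : ℝ) : EReal) := by
    intro x r hfx
    have hxb : x * b ≤ r + ϖ := (mul_le_add_toReal_econj hfx hb_dom).trans
      (by gcongr; exact (le_max_right _ _).trans (le_max_left _ _))
    have hxa : x * -a ≤ r + ϖ := (mul_le_add_toReal_econj hfx ha_dom).trans
      (by gcongr; exact (le_max_left _ _).trans (le_max_left _ _))
    refine erec_le_of_le_add_mul hfy fun t ht =>
      (le_add_max_mul_of_edom_econj_eq_Icc hLeg.2.2.1 hNonneg ha hb hdom hfy.le (t * x)).trans ?_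
    have hmax : max (b * (t * x)) (-a * (t * x)) ≤ t * (r + ϖ) :=
      max_le (by nlinarith) (by nlinarith)
    exact EReal.coe_le_coe_iff.mpr (by linarith)
  refine ⟨epi_shift, fun x r hfx => ?_⟩
  have hR : 0 ≤ r + (econj f β).toReal - x * β := by
    linarith [mul_le_add_toReal_econj hfx.le hβ.2]
  calc Metric.infDist ((x, r) : ℝ × ℝ) {q : ℝ × ℝ | erec f y q.1 ≤ (q.2 : EReal)}
      ≤ dist ((x, r) : ℝ × ℝ) (x, r + ϖ) := Metric.infDist_le_dist_of_mem (epi_shift x r hfx.le)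
    _ = ϖ := by simp [Prod.dist_eq, hϖ]
    _ ≤ _ := by linarith

/-- Let `f` be a nonnegative Legendre function with
`dom f* = [−a, b]`, `a, b ≥ 0`, `a + b > 0` (so `dom f = ℝ` and `dom f_∞ = ℝ`), and
let `β ∈ bdry(dom f*) ∩ dom f*`. With `R_β(x,ξ) = ξ + f*(β) − xβ` and
`ϖ = max{f*(−a), f*(b), 0}`, we have `epi f + (0,ϖ) ⊆ epi f_∞` and hence
`R_β(x, f(x)) + ϖ ≥ dist((x, f(x)), epi f_∞)` for all `x ∈ ℝ`. -/
theorem epi_shift_subset_and_dist_bound (f : ℝ → EReal) (hNonneg : ∀ x, 0 ≤ f x)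
    (hLeg : ELegendre f) (y : ℝ) (hy : y ∈ EDom f)
    (a b : ℝ) (ha : 0 ≤ a) (hb : 0 ≤ b) (hab : 0 < a + b)
    (hdom : EDom (econj f) = Set.Icc (-a) b)
    (β : ℝ) (hβ : β ∈ frontier (EDom (econj f)) ∩ EDom (econj f)) :
    (∀ x r : ℝ, f x ≤ (r : EReal) →
      erec f y x
        ≤ ((r + max (max ((econj f (-a)).toReal) ((econj f b).toReal)) 0 : ℝ) : EReal))
    ∧ ∀ x r : ℝ, f x = (r : EReal) →
        Metric.infDist ((x, r) : ℝ × ℝ) {q : ℝ × ℝ | erec f y q.1 ≤ (q.2 : EReal)}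
          ≤ r + (econj f β).toReal - x * β
            + max (max ((econj f (-a)).toReal) ((econj f b).toReal)) 0 :=
  epi_shift_subset_and_dist_bound_general f hNonneg hLeg y hy a b ha hb hdom β hβ
end
end
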